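/- arXiv:1608.05652 — 14 statements merged into one kernel-verified Lean document; each statement's English description precedes it below -/
import Mathlib

section
/- For all real k>0, d>0, 0<h<d, and ρ>1, the discriminant D = b² − 4(ρ−1)·cosh(kd)·sinh(kh)·sinh(k(d−h)) is strictly positive, where b = sinh(kd) + (ρ−1)·cosh(kh)·sinh(k(d−h)). -/
/-!
Since `cosh x * sinh y = sinh x * cosh y - sinh (x - y)`, the cross term of the square and the
product term combine, and the discriminant is `(sinh (kd) - B)² + 4(ρ - 1) sinh² (k(d - h))`
with `B = (ρ - 1) cosh (kh) sinh (k(d - h))`: a square plus a positive term.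
-/

open Real

theorem sinh_add_mul_sq_sub_eq_sq_add (x y c : ℝ) :
    (sinh x + c * cosh y * sinh (x - y))^2 - 4*c * cosh x * sinh y * sinh (x - y)
      = (sinh x - c * cosh y * sinh (x - y))^2 + 4*c * sinh (x - y)^2 := by
  have h : cosh x * sinh y = sinh x * cosh y - sinh (x - y) := by rw [sinh_sub]; ring
  linear_combination (-4*c * sinh (x - y)) * h

theorem discriminant_pos_general (k d h ρ : ℝ) (hk : 0 < k)
    (hhd : h < d) (hρ : 1 < ρ) :
    0 < (sinh (k*d) + (ρ-1) * cosh (k*h) * sinh (k*(d-h)))^2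
      - 4*(ρ-1) * cosh (k*d) * sinh (k*h) * sinh (k*(d-h)) := by
  have hs : 0 < sinh (k*(d-h)) := sinh_pos_iff.2 (mul_pos hk (sub_pos.2 hhd))
  rw [mul_sub] at hs ⊢
  rw [sinh_add_mul_sq_sub_eq_sq_add]
  exact add_pos_of_nonneg_of_pos (sq_nonneg _)
    (mul_pos (mul_pos four_pos (sub_pos.2 hρ)) (pow_pos hs 2))

theorem discriminant_pos (k d h ρ : ℝ) (hk : 0 < k) (hd : 0 < d)
    (hh : 0 < h) (hhd : h < d) (hρ : 1 < ρ) :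
    0 < (sinh (k*d) + (ρ-1) * cosh (k*h) * sinh (k*(d-h)))^2
      - 4*(ρ-1) * cosh (k*d) * sinh (k*h) * sinh (k*(d-h)) :=
  discriminant_pos_general k d h ρ hk hhd hρ
end

section
/- Fix k>0, d>0, 0<h<d. Regarded as a quadratic polynomial in the variable t = ρ−1 > 0, the discriminant D(t) = (sinh(kd) + t·cosh(kh)·sinh(k(d−h)))² − 4t·cosh(kd)·sinh(kh)·sinh(k(d−h)) attains its minimum over all real t at t* = (2·cosh(kd)·sinh(kh) − sinh(kd)·cosh(kh)) / (cosh²(kh)·sinh(k(d−h))), and D(t*) = 4·cosh(kd)·sinh(kh)·sinh(k(d−h)) / cosh²(kh) > 0. -/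
/-!
Write `D(t) = (a + t b)² - 4 t c` with `a = sinh(kd)`, `b = cosh(kh) sinh(k(d-h))` and
`c = cosh(kd) sinh(kh) sinh(k(d-h))`. Completing the square gives
`D(t) = b² (t - t*)² + 4 c (a b - c) / b²` with `t* = (2c - ab) / b²`, and the subtraction
formula `sinh(kd) cosh(kh) - cosh(kd) sinh(kh) = sinh(k(d-h))` turns `a b - c` into
`sinh²(k(d-h))`, which simplifies the minimum to the stated positive value.
-/

open Real

theorem add_mul_sq_sub_eq_sq_add (a b c t : ℝ) (hb : b ≠ 0) :
    (a + t * b) ^ 2 - 4 * t * c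
      = (b * (t - (2 * c - a * b) / b ^ 2)) ^ 2 + 4 * c * (a * b - c) / b ^ 2 := by
  field_simp
  ring

theorem sinh_mul_sub_mul_cosh_sub (k d h : ℝ) :
    sinh (k * d) * cosh (k * h) - cosh (k * d) * sinh (k * h) = sinh (k * (d - h)) := by
  rw [mul_sub, sinh_sub]

theorem discriminant_min_general (k d h : ℝ) (hk : 0 < k)
    (hh : 0 < h) (hhd : h < d) :
    let Dq : ℝ → ℝ := fun t =>
      (sinh (k*d) + t * cosh (k*h) * sinh (k*(d-h)))^2
        - 4*t * cosh (k*d) * sinh (k*h) * sinh (k*(d-h))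
    let tstar : ℝ := (2 * cosh (k*d) * sinh (k*h) - sinh (k*d) * cosh (k*h))
        / (cosh (k*h)^2 * sinh (k*(d-h)))
    (∀ t : ℝ, Dq tstar ≤ Dq t) ∧
      Dq tstar = 4 * cosh (k*d) * sinh (k*h) * sinh (k*(d-h)) / cosh (k*h)^2 ∧
      0 < Dq tstar := by
  intro Dq tstar
  have hSh : 0 < sinh (k * h) := sinh_pos_iff.mpr (by positivity)
  have hS : 0 < sinh (k * (d - h)) := sinh_pos_iff.mpr (mul_pos hk (sub_pos.mpr hhd))
  have hC : 0 < cosh (k * h) := cosh_pos _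
  set a := sinh (k * d)
  set b := cosh (k * h) * sinh (k * (d - h))
  set c := cosh (k * d) * sinh (k * h) * sinh (k * (d - h))
  have hb : b ≠ 0 := by positivity
  have hDq : ∀ t, Dq t = (b * (t - (2 * c - a * b) / b ^ 2)) ^ 2 + 4 * c * (a * b - c) / b ^ 2 :=
    fun t => by rw [← add_mul_sq_sub_eq_sq_add a b c t hb]; ring
  have htstar : tstar = (2 * c - a * b) / b ^ 2 := by
    simp only [tstar, a, b, c]; field_simp
  have hmin : 4 * c * (a * b - c) / b ^ 2
      = 4 * cosh (k * d) * sinh (k * h) * sinh (k * (d - h)) / cosh (k * h) ^ 2 := by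
    have hab : a * b - c = sinh (k * (d - h)) ^ 2 := by
      simp only [a, b, c]; rw [← sinh_mul_sub_mul_cosh_sub k d h]; ring
    rw [hab]; field_simp; ring
  have hval : Dq tstar = 4 * c * (a * b - c) / b ^ 2 := by
    rw [hDq, htstar, sub_self, mul_zero, zero_pow two_ne_zero, zero_add]
  refine ⟨fun t => ?_, hval.trans hmin, hval.trans hmin ▸ by positivity⟩
  rw [hval, hDq t]
  exact le_add_of_nonneg_left (sq_nonneg _)

theorem discriminant_min (k d h : ℝ) (hk : 0 < k) (hd : 0 < d)
    (hh : 0 < h) (hhd : h < d) :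
    let Dq : ℝ → ℝ := fun t =>
      (sinh (k*d) + t * cosh (k*h) * sinh (k*(d-h)))^2
        - 4*t * cosh (k*d) * sinh (k*h) * sinh (k*(d-h))
    let tstar : ℝ := (2 * cosh (k*d) * sinh (k*h) - sinh (k*d) * cosh (k*h))
        / (cosh (k*h)^2 * sinh (k*(d-h)))
    (∀ t : ℝ, Dq tstar ≤ Dq t) ∧
      Dq tstar = 4 * cosh (k*d) * sinh (k*h) * sinh (k*(d-h)) / cosh (k*h)^2 ∧
      0 < Dq tstar :=
  discriminant_min_general k d h hk hh hhd
end

section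
/- For k>0, d>0, 0<h<d, ρ>1, both roots ν± = k·(b ± √D)/(2·cosh(kd)) of the quadratic ν²·cosh(kd) − ν·k·b + k²·(ρ−1)·sinh(kh)·sinh(k(d−h)) = 0 are real and strictly positive, where b = sinh(kd) + (ρ−1)·cosh(kh)·sinh(k(d−h)) and D = b² − 4(ρ−1)·cosh(kd)·sinh(kh)·sinh(k(d−h)). -/
/-! With `ν = kμ`, `x = kh`, `y = k(d-h)` and `r = ρ - 1` the quadratic becomes
`cosh (x+y) μ² - b μ + r sinh x sinh y = 0`. The addition formulas and `cosh² x - sinh² x = 1` turn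
its discriminant into the sum of squares `(sinh (x+y) - r cosh x sinh y)² + 4 r sinh² y`, so the
roots are real; since `b` and the constant coefficient are positive, `√D < b` and both roots are
positive. -/

open Real

theorem quadratic_eq_zero_of_sq_eq_discrim {a b c s : ℝ} (ha : a ≠ 0) (hs : s ^ 2 = b ^ 2 - 4 * a * c) :
    ((b + s) / (2 * a)) ^ 2 * a - (b + s) / (2 * a) * b + c = 0 := by
  field_simp
  linear_combination hs

theorem sqrt_discrim_lt {a b c : ℝ} (hb : 0 < b) (hac : 0 < a * c) :
    √(b ^ 2 - 4 * a * c) < b :=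
  (sqrt_lt' hb).2 (by linarith)

theorem sinh_add_discrim_eq (x y r : ℝ) :
    (sinh (x + y) + r * cosh x * sinh y) ^ 2 - 4 * r * cosh (x + y) * sinh x * sinh y
      = (sinh (x + y) - r * cosh x * sinh y) ^ 2 + 4 * r * sinh y ^ 2 := by
  rw [sinh_add, cosh_add]
  linear_combination 4 * r * sinh y ^ 2 * cosh_sq_sub_sinh_sq x

theorem roots_real_positive_general (k d h ρ : ℝ) (hk : 0 < k)
    (hh : 0 < h) (hhd : h < d) (hρ : 1 < ρ) :
    let b : ℝ := sinh (k*d) + (ρ-1) * cosh (k*h) * sinh (k*(d-h))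
    let D : ℝ := b^2 - 4*(ρ-1) * cosh (k*d) * sinh (k*h) * sinh (k*(d-h))
    let νp : ℝ := k * (b + Real.sqrt D) / (2 * cosh (k*d))
    let νm : ℝ := k * (b - Real.sqrt D) / (2 * cosh (k*d))
    0 ≤ D ∧ 0 < νm ∧ 0 < νp ∧
      (νm^2 * cosh (k*d) - νm * k * b
        + k^2 * (ρ-1) * sinh (k*h) * sinh (k*(d-h)) = 0) ∧
      (νp^2 * cosh (k*d) - νp * k * b
        + k^2 * (ρ-1) * sinh (k*h) * sinh (k*(d-h)) = 0) := by
  intro b D νp νm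
  have hy : 0 < k * (d - h) := mul_pos hk (sub_pos.2 hhd)
  have hkd : k * d = k * h + k * (d - h) := by ring
  have hr : 0 < ρ - 1 := sub_pos.2 hρ
  have hb : 0 < b := by simp only [b]; rw [hkd]; positivity
  have hD : 0 ≤ D := by simp only [D, b]; rw [hkd, sinh_add_discrim_eq]; positivity
  have hDeq : D = b ^ 2 - 4 * cosh (k*d) * ((ρ - 1) * sinh (k*h) * sinh (k*(d-h))) := by
    simp only [D]; ring
  have hlt : √D < b := hDeq ▸ sqrt_discrim_lt hb (by positivity)
  have hroot (s : ℝ) (hs : s ^ 2 = D) :=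
    quadratic_eq_zero_of_sq_eq_discrim (cosh_pos (k*d)).ne' (hs.trans hDeq)
  refine ⟨hD, ?_, ?_, ?_, ?_⟩
  · exact div_pos (mul_pos hk (sub_pos.2 hlt)) (by positivity)
  · exact div_pos (mul_pos hk (by positivity)) (by positivity)
  · linear_combination k ^ 2 * hroot (-√D) (by rw [neg_sq, sq_sqrt hD])
  · linear_combination k ^ 2 * hroot (√D) (sq_sqrt hD)

theorem roots_real_positive (k d h ρ : ℝ) (hk : 0 < k) (hd : 0 < d)
    (hh : 0 < h) (hhd : h < d) (hρ : 1 < ρ) :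
    let b : ℝ := sinh (k*d) + (ρ-1) * cosh (k*h) * sinh (k*(d-h))
    let D : ℝ := b^2 - 4*(ρ-1) * cosh (k*d) * sinh (k*h) * sinh (k*(d-h))
    let νp : ℝ := k * (b + Real.sqrt D) / (2 * cosh (k*d))
    let νm : ℝ := k * (b - Real.sqrt D) / (2 * cosh (k*d))
    0 ≤ D ∧ 0 < νm ∧ 0 < νp ∧
      (νm^2 * cosh (k*d) - νm * k * b
        + k^2 * (ρ-1) * sinh (k*h) * sinh (k*(d-h)) = 0) ∧
      (νp^2 * cosh (k*d) - νp * k * b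
        + k^2 * (ρ-1) * sinh (k*h) * sinh (k*(d-h)) = 0) :=
  roots_real_positive_general k d h ρ hk hh hhd hρ
end

section
/- Fix k>0, d>0, 0<h<d. The function ρ ↦ ν⁻(ρ) = k·(b(ρ) − √D(ρ))/(2·cosh(kd)), where b(ρ) = sinh(kd) + (ρ−1)·cosh(kh)·sinh(k(d−h)) and D(ρ) = b(ρ)² − 4(ρ−1)·cosh(kd)·sinh(kh)·sinh(k(d−h)), is strictly increasing on (1,∞). -/
/-!
Write `t = ρ - 1`, `B(t) = S + t m` and `D(t) = B(t)² - 4 t P`, with `S = sinh (k d)`,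
`m = cosh (k h) sinh (k (d - h))` and `P = cosh (k d) sinh (k h) sinh (k (d - h))`.
The identity `m² D = (m B - 2 P)² + 4 P (S m - P)` and the addition formula
`S m - P = sinh (k (d - h))²` give `m √D > m B - 2 P`, i.e. `(√D)' = (m B - 2 P) / √D < m = B'`,
so `B - √D` is strictly increasing in `t` (on all of `ℝ`).
-/

open Real

section SmallerRoot

variable {S m P : ℝ}

lemma sq_mul_discrim_eq (S m P t : ℝ) :
    m ^ 2 * ((S + t * m) ^ 2 - 4 * t * P) = (m * (S + t * m) - 2 * P) ^ 2 + 4 * (P * (S * m - P)) := by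
  ring

lemma discrim_pos (hK : 0 < P * (S * m - P)) (t : ℝ) : 0 < (S + t * m) ^ 2 - 4 * t * P := by
  have h := sq_mul_discrim_eq S m P t
  nlinarith [sq_nonneg (m * (S + t * m) - 2 * P), sq_nonneg m]

lemma mul_sub_lt_mul_sqrt_discrim (hm : 0 < m) (hK : 0 < P * (S * m - P)) (t : ℝ) :
    m * (S + t * m) - 2 * P < m * √((S + t * m) ^ 2 - 4 * t * P) := by
  calc m * (S + t * m) - 2 * P ≤ |m * (S + t * m) - 2 * P| := le_abs_self _
    _ = √((m * (S + t * m) - 2 * P) ^ 2) := (sqrt_sq_eq_abs _).symm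
    _ < √((m * (S + t * m) - 2 * P) ^ 2 + 4 * (P * (S * m - P))) :=
      sqrt_lt_sqrt (sq_nonneg _) (by linarith)
    _ = √(m ^ 2 * ((S + t * m) ^ 2 - 4 * t * P)) := by rw [sq_mul_discrim_eq]
    _ = m * √((S + t * m) ^ 2 - 4 * t * P) := by rw [sqrt_mul (sq_nonneg m), sqrt_sq hm.le]

theorem strictMono_sub_sqrt_discrim (hm : 0 < m) (hK : 0 < P * (S * m - P)) :
    StrictMono fun t => (S + t * m) - √((S + t * m) ^ 2 - 4 * t * P) := by
  intro t u htu
  have hD := discrim_pos hK t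
  have hkey := mul_sub_lt_mul_sqrt_discrim hm hK t
  suffices √((S + u * m) ^ 2 - 4 * u * P) < √((S + t * m) ^ 2 - 4 * t * P) + (u - t) * m by
    dsimp only
    nlinarith
  have hsq : (S + u * m) ^ 2 - 4 * u * P < (√((S + t * m) ^ 2 - 4 * t * P) + (u - t) * m) ^ 2 := by
    have hdiff : (S + u * m) ^ 2 - 4 * u * P - ((S + t * m) ^ 2 - 4 * t * P)
        = 2 * (u - t) * (m * (S + t * m) - 2 * P) + ((u - t) * m) ^ 2 := by ring
    rw [add_sq (√((S + t * m) ^ 2 - 4 * t * P)), sq_sqrt hD.le]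
    nlinarith [mul_lt_mul_of_pos_left hkey (sub_pos.mpr htu)]
  exact (sqrt_lt' (by nlinarith [sqrt_nonneg ((S + t * m) ^ 2 - 4 * t * P)])).mpr hsq

end SmallerRoot

theorem nu_minus_strictMono_general (k d h : ℝ) (hk : 0 < k)
    (hh : 0 < h) (hhd : h < d) :
    StrictMonoOn (fun ρ : ℝ =>
      k * ((sinh (k*d) + (ρ-1) * cosh (k*h) * sinh (k*(d-h)))
          - Real.sqrt ((sinh (k*d) + (ρ-1) * cosh (k*h) * sinh (k*(d-h)))^2
              - 4*(ρ-1) * cosh (k*d) * sinh (k*h) * sinh (k*(d-h))))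
        / (2 * cosh (k*d)))
      (Set.Ioi 1) := by
  set m := cosh (k * h) * sinh (k * (d - h))
  set P := cosh (k * d) * sinh (k * h) * sinh (k * (d - h))
  have hs₂ : 0 < sinh (k * (d - h)) := sinh_pos_iff.mpr (mul_pos hk (sub_pos.mpr hhd))
  have hm : 0 < m := by positivity
  have hSmP : sinh (k * d) * m - P = sinh (k * (d - h)) ^ 2 := by
    simp only [m, P]
    rw [show k * (d - h) = k * d - k * h by ring, sinh_sub]
    ring
  have hK : 0 < P * (sinh (k * d) * m - P) := by
    rw [hSmP]
    positivity
  have hmono := (((strictMono_sub_sqrt_discrim hm hK).comp fun _ _ h => sub_lt_sub_right h 1).const_mul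
    hk).div_const (by positivity : (0 : ℝ) < 2 * cosh (k * d))
  intro p _ q _ hpq
  convert hmono hpq using 1 <;> simp only [Function.comp_apply, m, P] <;> ring_nf

theorem nu_minus_strictMono (k d h : ℝ) (hk : 0 < k) (hd : 0 < d)
    (hh : 0 < h) (hhd : h < d) :
    StrictMonoOn (fun ρ : ℝ =>
      k * ((sinh (k*d) + (ρ-1) * cosh (k*h) * sinh (k*(d-h)))
          - Real.sqrt ((sinh (k*d) + (ρ-1) * cosh (k*h) * sinh (k*(d-h)))^2
              - 4*(ρ-1) * cosh (k*d) * sinh (k*h) * sinh (k*(d-h))))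
        / (2 * cosh (k*d)))
      (Set.Ioi 1) :=
  nu_minus_strictMono_general k d h hk hh hhd
end

section
/- Fix k>0, d>0, 0<h<d. The function ρ ↦ ν⁺(ρ) = k·(b(ρ) + √D(ρ))/(2·cosh(kd)), with b and D as in the two-layer sloshing quadratic, is strictly increasing on (1,∞). -/
/-!
The quantity `b + √D` is twice the larger root of
`X² − b X + (ρ−1)·cosh(kd)·sinh(kh)·sinh(k(d−h))`. As `ρ` varies these quadratics form the pencil
`X² − sinh(kd)·X − (ρ−1)·α·(X − z)`, with `α = cosh(kh)·sinh(k(d−h))` and `z = cosh(kd)·tanh(kh)`,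
all passing through the point `(z, z² − sinh(kd)·z)`, which lies below the axis because
`0 < z < sinh(kd)`. Hence `z` separates the roots, and raising `ρ` makes the quadratic negative at
the old larger root, which therefore lies below the new one.
-/

open Real

noncomputable def largerRoot (b p : ℝ) : ℝ := (b + √(b ^ 2 - 4 * p)) / 2

lemma sq_two_mul_sub_lt_discrim {b p z : ℝ} (h : z ^ 2 - b * z + p < 0) :
    (2 * z - b) ^ 2 < b ^ 2 - 4 * p := by
  linarith

lemma lt_largerRoot_of_neg {b p z : ℝ} (h : z ^ 2 - b * z + p < 0) : z < largerRoot b p := by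
  have hsqrt : |2 * z - b| < √(b ^ 2 - 4 * p) := by
    rw [← sqrt_sq_eq_abs]
    exact sqrt_lt_sqrt (sq_nonneg _) (sq_two_mul_sub_lt_discrim h)
  unfold largerRoot
  linarith [le_abs_self (2 * z - b)]

lemma largerRoot_sq_sub_mul_add_eq_zero {b p : ℝ} (h : 0 ≤ b ^ 2 - 4 * p) :
    largerRoot b p ^ 2 - b * largerRoot b p + p = 0 := by
  unfold largerRoot
  linear_combination (sq_sqrt h) / 4

lemma strictMono_largerRoot_pencil {s α z : ℝ} (hα : 0 < α) (hz : z ^ 2 - s * z < 0) :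
    StrictMono fun t => largerRoot (s + t * α) (t * (α * z)) := by
  intro t u htu
  set r := largerRoot (s + t * α) (t * (α * z))
  have hzt : z ^ 2 - (s + t * α) * z + t * (α * z) < 0 := by linarith
  have hzr : z < r := lt_largerRoot_of_neg hzt
  have hr : r ^ 2 - (s + t * α) * r + t * (α * z) = 0 :=
    largerRoot_sq_sub_mul_add_eq_zero (sq_nonneg _ |>.trans (sq_two_mul_sub_lt_discrim hzt).le)
  apply lt_largerRoot_of_neg
  have hpos : 0 < (u - t) * α * (r - z) := by
    have := sub_pos.2 htu; have := sub_pos.2 hzr; positivity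
  linear_combination hr + hpos

lemma cosh_mul_sinh_lt_sinh_mul_cosh {x y : ℝ} (h : x < y) :
    cosh y * sinh x < sinh y * cosh x := by
  have := sinh_pos_iff.2 (sub_pos.2 h)
  rw [sinh_sub] at this
  linarith

theorem nu_plus_strictMono_general (k d h : ℝ) (hk : 0 < k)
    (hh : 0 < h) (hhd : h < d) :
    StrictMonoOn (fun ρ : ℝ =>
      k * ((sinh (k*d) + (ρ-1) * cosh (k*h) * sinh (k*(d-h)))
          + Real.sqrt ((sinh (k*d) + (ρ-1) * cosh (k*h) * sinh (k*(d-h)))^2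
              - 4*(ρ-1) * cosh (k*d) * sinh (k*h) * sinh (k*(d-h))))
        / (2 * cosh (k*d)))
      (Set.Ioi 1) := by
  set α := cosh (k*h) * sinh (k*(d-h)) with hα_def
  set z := cosh (k*d) * sinh (k*h) / cosh (k*h)
  have hα : 0 < α := mul_pos (cosh_pos _) (sinh_pos_iff.2 (by nlinarith))
  have hz0 : 0 < z := by have := sinh_pos_iff.2 (mul_pos hk hh); positivity
  have hzs : z < sinh (k*d) :=
    (div_lt_iff₀ (cosh_pos _)).2 (cosh_mul_sinh_lt_sinh_mul_cosh (by nlinarith))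
  have hαz : α * z = cosh (k*d) * sinh (k*h) * sinh (k*(d-h)) := by
    simp only [α, z]
    field_simp [(cosh_pos (k*h)).ne']
  have hν : StrictMono fun ρ =>
      k / cosh (k*d) * largerRoot (sinh (k*d) + (ρ-1) * α) ((ρ-1) * (α * z)) :=
    ((strictMono_largerRoot_pencil hα (by nlinarith)).comp
      fun _ _ h => sub_lt_sub_right h 1).const_mul (div_pos hk (cosh_pos _))
  convert hν.strictMonoOn (Set.Ioi 1) using 1
  funext ρ
  unfold largerRoot
  rw [hαz, hα_def]
  field_simp [(cosh_pos (k*d)).ne']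

theorem nu_plus_strictMono (k d h : ℝ) (hk : 0 < k) (hd : 0 < d)
    (hh : 0 < h) (hhd : h < d) :
    StrictMonoOn (fun ρ : ℝ =>
      k * ((sinh (k*d) + (ρ-1) * cosh (k*h) * sinh (k*(d-h)))
          + Real.sqrt ((sinh (k*d) + (ρ-1) * cosh (k*h) * sinh (k*(d-h)))^2
              - 4*(ρ-1) * cosh (k*d) * sinh (k*h) * sinh (k*(d-h))))
        / (2 * cosh (k*d)))
      (Set.Ioi 1) :=
  nu_plus_strictMono_general k d h hk hh hhd
end

section
/- Fix k>0, d>0, 0<h<d. As ρ → 1⁺, ν⁻(ρ) → 0, and as ρ → ∞, ν⁻(ρ) → k·tanh(kh); moreover ν⁻(ρ) ∈ (0, k·tanh(kh)) for all ρ > 1. -/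
/-!
For `ρ > 1`, `ν⁻(ρ) / k` is the smaller root of `cosh(kd) x² - b(ρ) x + (ρ-1) sinh(kh) sinh(k(d-h))`.
The quadratic has positive coefficients, so its smaller root is positive, and it is negative at
`x = tanh(kh)` for every `ρ` (the `ρ`-dependent terms cancel there), so the root lies below `tanh(kh)`.
As `ρ → 1⁺` the constant coefficient vanishes and the root tends to `0`; as `ρ → ∞` the quadratic,
divided by `ρ - 1`, tends to a linear polynomial with root `tanh(kh)`.
-/

open Real Filter Topology

/-- The smaller root of `a x² - b x + c` (note the sign of `b`), meaningful when `0 < a` and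
`0 ≤ discrim a b c`. -/
noncomputable def lowerRoot (a b c : ℝ) : ℝ :=
  (b - √(discrim a b c)) / (2 * a)

section LowerRoot

variable {a b c : ℝ}

theorem lowerRoot_eq_div (ha : a ≠ 0) (hb : 0 < b) (hD : 0 ≤ discrim a b c) :
    lowerRoot a b c = 2 * c / (b + √(discrim a b c)) := by
  have hsum : 0 < b + √(discrim a b c) := by positivity
  rw [lowerRoot, div_eq_div_iff (mul_ne_zero two_ne_zero ha) hsum.ne']
  have hsq := sq_sqrt hD
  rw [discrim] at hsq ⊢
  linear_combination -hsq

theorem lowerRoot_pos (ha : 0 < a) (hb : 0 < b) (hc : 0 < c) : 0 < lowerRoot a b c := by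
  have hsqrt : √(discrim a b c) < b := by
    rw [sqrt_lt' hb, discrim]
    nlinarith [mul_pos ha hc]
  exact div_pos (sub_pos.mpr hsqrt) (by positivity)

/-- The graph of `a x² - b x + c` dips below zero at `x`, so `x` lies strictly between the roots. -/
theorem lowerRoot_lt {x : ℝ} (ha : 0 < a) (hx : a * x ^ 2 - b * x + c < 0) :
    lowerRoot a b c < x := by
  have hsq : (b - 2 * a * x) ^ 2 < discrim a b c := by
    rw [discrim]
    nlinarith [mul_pos ha (neg_pos.mpr hx)]
  have hsqrt : b - 2 * a * x < √(discrim a b c) :=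
    (le_abs_self _).trans_lt (sqrt_sq_eq_abs (b - 2 * a * x) ▸ sqrt_lt_sqrt (sq_nonneg _) hsq)
  rw [lowerRoot, div_lt_iff₀ (by positivity)]
  linarith

theorem lowerRoot_zero (hb : 0 ≤ b) : lowerRoot a b 0 = 0 := by
  simp [lowerRoot, discrim, sqrt_sq hb]

variable (a) {A B E : ℝ}

/-- At a point `x` with `B x = E`, the `t`-dependent terms of the quadratic cancel. -/
theorem lowerRoot_affine_lt {x : ℝ} (ha : 0 < a) (hx : 0 < x) (hxA : a * x < A)
    (hBE : B * x = E) (t : ℝ) : lowerRoot a (A + t * B) (t * E) < x := by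
  refine lowerRoot_lt ha ?_
  calc a * x ^ 2 - (A + t * B) * x + t * E = x * (a * x - A) + t * (E - B * x) := by ring
    _ < 0 := by rw [hBE, sub_self, mul_zero, add_zero]; nlinarith

theorem tendsto_lowerRoot_nhds_zero (hA : 0 ≤ A) :
    Tendsto (fun t => lowerRoot a (A + t * B) (t * E)) (𝓝 0) (𝓝 0) := by
  have hcont : Continuous fun t => lowerRoot a (A + t * B) (t * E) := by
    unfold lowerRoot discrim
    fun_prop
  simpa [lowerRoot_zero hA] using hcont.tendsto 0

/-- Dividing the quadratic by `t`, the smaller root tends to the root `E / B` of `B x - E`. -/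
theorem tendsto_lowerRoot_atTop (ha : a ≠ 0) (hB : 0 < B) :
    Tendsto (fun t => lowerRoot a (A + t * B) (t * E)) atTop (𝓝 (E / B)) := by
  have hβ : Tendsto (fun t => A / t + B) atTop (𝓝 B) := by
    simpa using (tendsto_const_nhds.div_atTop tendsto_id).add_const B
  have hδ : Tendsto (fun t => (A / t + B) ^ 2 - 4 * a * E / t) atTop (𝓝 (B ^ 2)) := by
    simpa using (hβ.pow 2).sub (tendsto_const_nhds.div_atTop tendsto_id)
  have hlim : Tendsto (fun t => 2 * E / (A / t + B + √((A / t + B) ^ 2 - 4 * a * E / t)))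
      atTop (𝓝 (E / B)) := by
    have := tendsto_const_nhds (x := 2 * E) |>.div (hβ.add hδ.sqrt) (by positivity)
    rwa [sqrt_sq hB.le, ← two_mul, mul_div_mul_left _ _ two_ne_zero] at this
  refine hlim.congr' ?_
  filter_upwards [eventually_gt_atTop 0, hβ.eventually (lt_mem_nhds hB),
    hδ.eventually (lt_mem_nhds (by positivity))] with t ht hβt hδt
  have hdiscrim : discrim a (A + t * B) (t * E) = t ^ 2 * ((A / t + B) ^ 2 - 4 * a * E / t) := by
    rw [discrim]
    field_simp
  have hb : A + t * B = t * (A / t + B) := by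
    field_simp
  rw [lowerRoot_eq_div ha (by rw [hb]; positivity) (by rw [hdiscrim]; positivity), hdiscrim,
    sqrt_mul' _ hδt.le, sqrt_sq ht.le, hb, ← mul_add, mul_left_comm, mul_div_mul_left _ _ ht.ne']

end LowerRoot

theorem cosh_mul_tanh (x : ℝ) : cosh x * tanh x = sinh x := by
  rw [tanh_eq_sinh_div_cosh, mul_div_cancel₀ _ (cosh_pos x).ne']

theorem tanh_pos {x : ℝ} (hx : 0 < x) : 0 < tanh x := by
  rw [tanh_eq_sinh_div_cosh]
  exact div_pos (sinh_pos_iff.mpr hx) (cosh_pos x)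

theorem cosh_mul_tanh_lt_sinh {x y : ℝ} (hyx : y < x) : cosh x * tanh y < sinh x := by
  have hsub := sinh_pos_iff.mpr (sub_pos.mpr hyx)
  rw [sinh_sub] at hsub
  rw [tanh_eq_sinh_div_cosh, mul_div_assoc', div_lt_iff₀ (cosh_pos y)]
  linarith

theorem nu_minus_range (k d h : ℝ) (hk : 0 < k) (hd : 0 < d)
    (hh : 0 < h) (hhd : h < d) :
    let νm : ℝ → ℝ := fun ρ =>
      k * ((sinh (k*d) + (ρ-1) * cosh (k*h) * sinh (k*(d-h)))
          - Real.sqrt ((sinh (k*d) + (ρ-1) * cosh (k*h) * sinh (k*(d-h)))^2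
              - 4*(ρ-1) * cosh (k*d) * sinh (k*h) * sinh (k*(d-h))))
        / (2 * cosh (k*d))
    Tendsto νm (nhdsWithin 1 (Set.Ioi 1)) (nhds 0) ∧
      Tendsto νm atTop (nhds (k * tanh (k*h))) ∧
      ∀ ρ : ℝ, 1 < ρ → νm ρ ∈ Set.Ioo 0 (k * tanh (k*h)) := by
  intro νm
  have hkd : 0 < sinh (k*d) := sinh_pos_iff.mpr (by positivity)
  have hkh : 0 < sinh (k*h) := sinh_pos_iff.mpr (by positivity)
  have hkdh : 0 < sinh (k*(d-h)) := sinh_pos_iff.mpr (mul_pos hk (sub_pos.mpr hhd))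
  set B := cosh (k*h) * sinh (k*(d-h))
  set E := sinh (k*h) * sinh (k*(d-h))
  have hν : νm = fun ρ => k * lowerRoot (cosh (k*d)) (sinh (k*d) + (ρ-1) * B) ((ρ-1) * E) := by
    funext ρ
    simp only [νm, B, E, lowerRoot, discrim]
    ring_nf
  have hBtanh : B * tanh (k*h) = E := by
    rw [mul_right_comm, cosh_mul_tanh]
  refine ⟨?_, ?_, fun ρ hρ => ?_⟩
  · have hρ : Tendsto (fun ρ : ℝ => ρ - 1) (𝓝[>] 1) (𝓝 0) :=
      ((continuous_sub_right 1).tendsto' 1 0 (sub_self 1)).mono_left nhdsWithin_le_nhds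
    simpa [hν] using
      ((tendsto_lowerRoot_nhds_zero (cosh (k*d)) (B := B) (E := E) hkd.le).comp hρ).const_mul k
  · have hρ : Tendsto (fun ρ : ℝ => ρ - 1) atTop atTop := tendsto_atTop_add_const_right _ _ tendsto_id
    have hlim : E / B = tanh (k*h) := by
      rw [← hBtanh, mul_div_cancel_left₀ _ (by positivity)]
    simpa [hν, hlim] using ((tendsto_lowerRoot_atTop (cosh (k*d)) (A := sinh (k*d)) (B := B) (E := E)
      (cosh_pos _).ne' (by positivity)).comp hρ).const_mul k
  · have hkhd : k*h < k*d := mul_lt_mul_of_pos_left hhd hk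
    rw [hν]
    exact ⟨mul_pos hk (lowerRoot_pos (cosh_pos _) (by positivity) (by positivity)),
      mul_lt_mul_of_pos_left (lowerRoot_affine_lt _ (cosh_pos _) (tanh_pos (by positivity))
        (cosh_mul_tanh_lt_sinh hkhd) hBtanh _) hk⟩
end

section
/- Fix k>0, d>0, 0<h<d. As ρ → 1⁺, ν⁺(ρ) → k·tanh(kd), and ν⁺(ρ) → ∞ as ρ → ∞; moreover ν⁺(ρ) > k·tanh(kd) for all ρ > 1. -/
/-!
The sinh subtraction formula `sinh(kd) cosh(kh) - cosh(kd) sinh(kh) = sinh(k(d-h))` turns the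
discriminant into `D(ρ) = (sinh(kd) - (ρ-1) cosh(kh) sinh(k(d-h)))² + 4(ρ-1) sinh²(k(d-h))`.
For `ρ > 1` the second term is positive, so `√D(ρ)` exceeds `sinh(kd) - (ρ-1) cosh(kh) sinh(k(d-h))`
and `b(ρ) + √D(ρ) > 2 sinh(kd)`, which is `ν⁺(ρ) > k tanh(kd)`. At `ρ = 1` the discriminant is
`sinh²(kd)`, so `ν⁺(1) = k tanh(kd)` and continuity gives the limit; `ν⁺ ≥ k b / (2 cosh(kd))`,
which is linear in `ρ` with positive slope, gives the growth.
-/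

open Real Filter

noncomputable section NuPlus

variable (k d h : ℝ)

def nuB (ρ : ℝ) : ℝ := sinh (k*d) + (ρ-1) * cosh (k*h) * sinh (k*(d-h))

def nuD (ρ : ℝ) : ℝ := nuB k d h ρ ^ 2 - 4*(ρ-1) * cosh (k*d) * sinh (k*h) * sinh (k*(d-h))

def nuPlus (ρ : ℝ) : ℝ := k * (nuB k d h ρ + √(nuD k d h ρ)) / (2 * cosh (k*d))

theorem lt_sqrt_sq_add (a : ℝ) {q : ℝ} (hq : 0 < q) : a < √(a ^ 2 + q) :=
  calc a ≤ |a| := le_abs_self a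
    _ = √(a ^ 2) := (sqrt_sq_eq_abs a).symm
    _ < √(a ^ 2 + q) := sqrt_lt_sqrt (sq_nonneg a) (by linarith)

theorem nuD_eq (ρ : ℝ) :
    nuD k d h ρ = (sinh (k*d) - (ρ-1) * cosh (k*h) * sinh (k*(d-h))) ^ 2
      + 4 * (ρ-1) * sinh (k*(d-h)) ^ 2 := by
  have hsub : sinh (k*d) * cosh (k*h) - cosh (k*d) * sinh (k*h) = sinh (k*(d-h)) := by
    rw [mul_sub, sinh_sub]
  rw [nuD, nuB]
  linear_combination 4 * (ρ-1) * sinh (k*(d-h)) * hsub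

theorem nuPlus_one (hkd : 0 ≤ k * d) : nuPlus k d h 1 = k * tanh (k*d) := by
  have hs : 0 ≤ sinh (k*d) := sinh_nonneg_iff.mpr hkd
  have hc : cosh (k*d) ≠ 0 := (cosh_pos _).ne'
  simp only [nuPlus, nuD, nuB, sub_self, zero_mul, mul_zero, add_zero, sub_zero,
    sqrt_sq hs, tanh_eq_sinh_div_cosh]
  field_simp
  ring

theorem continuous_nuPlus : Continuous (nuPlus k d h) := by
  unfold nuPlus nuD nuB
  fun_prop

theorem tendsto_nuPlus_nhdsGT_one (hkd : 0 ≤ k * d) :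
    Tendsto (nuPlus k d h) (nhdsWithin 1 (Set.Ioi 1)) (nhds (k * tanh (k*d))) := by
  rw [← nuPlus_one k d h hkd]
  exact (continuous_nuPlus k d h).continuousWithinAt

theorem tendsto_nuB_atTop (hk : 0 < k) (hhd : h < d) : Tendsto (nuB k d h) atTop atTop := by
  have hS : 0 < sinh (k*(d-h)) := sinh_pos_iff.mpr (mul_pos hk (sub_pos.mpr hhd))
  refine tendsto_atTop_add_const_left _ _ ?_
  refine ((tendsto_atTop_add_const_right _ (-1) tendsto_id).atTop_mul_const
    (cosh_pos (k*h))).atTop_mul_const hS |>.congr fun ρ => ?_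
  simp [sub_eq_add_neg]

theorem tendsto_nuPlus_atTop (hk : 0 < k) (hhd : h < d) :
    Tendsto (nuPlus k d h) atTop atTop := by
  have hr : 0 < k / (2 * cosh (k*d)) := by have := cosh_pos (k*d); positivity
  refine tendsto_atTop_mono (fun ρ => ?_) ((tendsto_nuB_atTop k d h hk hhd).atTop_mul_const hr)
  rw [nuPlus, mul_div_assoc', mul_comm, mul_div_assoc, mul_div_assoc]
  gcongr
  exact le_add_of_nonneg_right (sqrt_nonneg _)

theorem mul_tanh_lt_nuPlus (hk : 0 < k) (hhd : h < d) {ρ : ℝ} (hρ : 1 < ρ) :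
    k * tanh (k*d) < nuPlus k d h ρ := by
  have hS : 0 < sinh (k*(d-h)) := sinh_pos_iff.mpr (mul_pos hk (sub_pos.mpr hhd))
  have hroot : 2 * sinh (k*d) < nuB k d h ρ + √(nuD k d h ρ) := by
    have := lt_sqrt_sq_add (sinh (k*d) - (ρ-1) * cosh (k*h) * sinh (k*(d-h)))
      (q := 4 * (ρ-1) * sinh (k*(d-h)) ^ 2) (by have := sub_pos.mpr hρ; positivity)
    rw [nuD_eq, nuB]
    linarith
  calc k * tanh (k*d) = k * (2 * sinh (k*d)) / (2 * cosh (k*d)) := by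
        rw [tanh_eq_sinh_div_cosh]; field_simp
    _ < nuPlus k d h ρ := by rw [nuPlus]; gcongr

end NuPlus

theorem nu_plus_range_general (k d h : ℝ) (hk : 0 < k) (hd : 0 < d)
    (hhd : h < d) :
    let νp : ℝ → ℝ := fun ρ =>
      k * ((sinh (k*d) + (ρ-1) * cosh (k*h) * sinh (k*(d-h)))
          + Real.sqrt ((sinh (k*d) + (ρ-1) * cosh (k*h) * sinh (k*(d-h)))^2
              - 4*(ρ-1) * cosh (k*d) * sinh (k*h) * sinh (k*(d-h))))
        / (2 * cosh (k*d))
    Tendsto νp (nhdsWithin 1 (Set.Ioi 1)) (nhds (k * tanh (k*d))) ∧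
      Tendsto νp atTop atTop ∧
      ∀ ρ : ℝ, 1 < ρ → k * tanh (k*d) < νp ρ :=
  ⟨tendsto_nuPlus_nhdsGT_one k d h (mul_pos hk hd).le, tendsto_nuPlus_atTop k d h hk hhd,
    fun _ hρ => mul_tanh_lt_nuPlus k d h hk hhd hρ⟩

theorem nu_plus_range (k d h : ℝ) (hk : 0 < k) (hd : 0 < d)
    (hh : 0 < h) (hhd : h < d) :
    let νp : ℝ → ℝ := fun ρ =>
      k * ((sinh (k*d) + (ρ-1) * cosh (k*h) * sinh (k*(d-h)))
          + Real.sqrt ((sinh (k*d) + (ρ-1) * cosh (k*h) * sinh (k*(d-h)))^2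
              - 4*(ρ-1) * cosh (k*d) * sinh (k*h) * sinh (k*(d-h))))
        / (2 * cosh (k*d))
    Tendsto νp (nhdsWithin 1 (Set.Ioi 1)) (nhds (k * tanh (k*d))) ∧
      Tendsto νp atTop atTop ∧
      ∀ ρ : ℝ, 1 < ρ → k * tanh (k*d) < νp ρ :=
  nu_plus_range_general k d h hk hd hhd
end

section
/- For every k>0, d>0, 0<h<d and ρ>1, the strict inequalities ν⁻ < k·tanh(kd) < ν⁺ hold, where ν± are the two roots of the two-layer sloshing quadratic. -/
/-!
Write `s = sinh (k d)`, so that `k tanh (k d) = k (2 s) / (2 cosh (k d))`. The addition formula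
`sinh (k (d - h)) = s cosh (k h) - cosh (k d) sinh (k h)` turns the discriminant into
`D = (2 s - b)² + 4 (ρ - 1) sinh² (k (d - h))`, so `D > (2 s - b)²` and `2 s` lies strictly between
`b - √D` and `b + √D`.
-/

open Real

lemma sub_sqrt_lt_and_lt_add_sqrt_of_sq_lt {x b D : ℝ} (h : (x - b) ^ 2 < D) :
    b - √D < x ∧ x < b + √D := by
  have hx : |x - b| < √D := (Real.lt_sqrt (abs_nonneg _)).2 (by rwa [sq_abs])
  constructor <;> linarith [abs_lt.1 hx]

lemma sinh_discriminant_eq (x y r : ℝ) :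
    let b := sinh x + r * cosh y * sinh (x - y)
    b ^ 2 - 4 * r * cosh x * sinh y * sinh (x - y) =
      (2 * sinh x - b) ^ 2 + 4 * r * sinh (x - y) ^ 2 := by
  intro b
  simp only [b]
  linear_combination (-4 * r * sinh (x - y)) * sinh_sub x y

lemma mul_tanh_eq_mul_two_sinh_div (k x : ℝ) :
    k * tanh x = k * (2 * sinh x) / (2 * cosh x) := by
  rw [tanh_eq_sinh_div_cosh, mul_div_assoc, mul_div_mul_left _ _ two_ne_zero]

theorem nu_interlacing_general (k d h ρ : ℝ) (hk : 0 < k)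
    (hhd : h < d) (hρ : 1 < ρ) :
    let b : ℝ := sinh (k*d) + (ρ-1) * cosh (k*h) * sinh (k*(d-h))
    let D : ℝ := b^2 - 4*(ρ-1) * cosh (k*d) * sinh (k*h) * sinh (k*(d-h))
    k * (b - Real.sqrt D) / (2 * cosh (k*d)) < k * tanh (k*d) ∧
      k * tanh (k*d) < k * (b + Real.sqrt D) / (2 * cosh (k*d)) := by
  intro b D
  have hsinh : 0 < sinh (k * (d - h)) := sinh_pos_iff.2 (mul_pos hk (sub_pos.2 hhd))
  have hD : D = (2 * sinh (k*d) - b) ^ 2 + 4 * (ρ - 1) * sinh (k * (d - h)) ^ 2 := by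
    have hdisc := sinh_discriminant_eq (k*d) (k*h) (ρ - 1)
    rwa [← mul_sub] at hdisc
  have hgap : (2 * sinh (k*d) - b) ^ 2 < D := by
    rw [hD]; nlinarith [pow_pos hsinh 2]
  obtain ⟨hlow, hhigh⟩ := sub_sqrt_lt_and_lt_add_sqrt_of_sq_lt hgap
  have hcosh : 0 < 2 * cosh (k*d) := by positivity
  rw [mul_tanh_eq_mul_two_sinh_div]
  exact ⟨div_lt_div_of_pos_right (mul_lt_mul_of_pos_left hlow hk) hcosh,
    div_lt_div_of_pos_right (mul_lt_mul_of_pos_left hhigh hk) hcosh⟩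

theorem nu_interlacing (k d h ρ : ℝ) (hk : 0 < k) (hd : 0 < d)
    (hh : 0 < h) (hhd : h < d) (hρ : 1 < ρ) :
    let b : ℝ := sinh (k*d) + (ρ-1) * cosh (k*h) * sinh (k*(d-h))
    let D : ℝ := b^2 - 4*(ρ-1) * cosh (k*d) * sinh (k*h) * sinh (k*(d-h))
    k * (b - Real.sqrt D) / (2 * cosh (k*d)) < k * tanh (k*d) ∧
      k * tanh (k*d) < k * (b + Real.sqrt D) / (2 * cosh (k*d)) :=
  nu_interlacing_general k d h ρ hk hhd hρ
end

section
/- Fix d>0, 0<h<d and ρ>1. As k → ∞, ν⁺(k)/k → (ρ+1+|ρ−3|)/4 and ν⁻(k)/k → (ρ+1−|ρ−3|)/4. -/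
/-! Dividing by `cosh (k d)`, every hyperbolic product occurring in `b` and `D` reduces, by the
product-to-sum formulas, to `cosh (k d)` or `sinh (k d)` plus a term of frequency `|d - 2h| < d`,
which is negligible against `cosh (k d)`. Hence `b / cosh (k d) → (ρ + 1) / 2` and
`D / cosh (k d) ^ 2 → ((ρ + 1) / 2) ^ 2 - 2 (ρ - 1) = ((ρ - 3) / 2) ^ 2`, so
`ν± (k) / k = (b ± √D) / (2 cosh (k d)) → ((ρ + 1) / 2 ± |ρ - 3| / 2) / 2`. -/

open Real Filter Topology

namespace Real

lemma cosh_le_exp_abs (x : ℝ) : cosh x ≤ exp |x| := by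
  rw [← cosh_abs, cosh_eq]
  linarith [exp_le_exp.2 (neg_le_self (abs_nonneg x))]

lemma cosh_div_cosh_le (x y : ℝ) : cosh x / cosh y ≤ 2 * exp (|x| - |y|) := by
  have hy : exp |y| ≤ 2 * cosh y := by
    rw [cosh_eq]
    linarith [exp_abs_le y]
  rw [div_le_iff₀ (cosh_pos y), exp_sub]
  calc cosh x ≤ exp |x| := cosh_le_exp_abs x
    _ = exp |x| / exp |y| * exp |y| := (div_mul_cancel₀ _ (exp_pos _).ne').symm
    _ ≤ exp |x| / exp |y| * (2 * cosh y) := by gcongr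
    _ = 2 * (exp |x| / exp |y|) * cosh y := by ring

lemma abs_sinh_le_cosh (x : ℝ) : |sinh x| ≤ cosh x := by
  rw [abs_sinh, ← cosh_abs x]
  exact (sinh_lt_cosh _).le

lemma cosh_mul_sinh (x y : ℝ) : cosh x * sinh y = (sinh (x + y) + sinh (y - x)) / 2 := by
  rw [sinh_add, sinh_sub]
  ring

lemma sinh_mul_sinh (x y : ℝ) : sinh x * sinh y = (cosh (x + y) - cosh (y - x)) / 2 := by
  rw [cosh_add, cosh_sub]
  ring

lemma tendsto_tanh_atTop : Tendsto tanh atTop (𝓝 1) := by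
  have h_one_sub : ∀ x, 1 - exp (-x) / cosh x = tanh x := fun x => by
    rw [tanh_eq_sinh_div_cosh, ← cosh_sub_sinh, sub_div, div_self (cosh_pos x).ne']
    ring
  have h_exp : Tendsto (fun x => exp (-x)) atTop (𝓝 0) :=
    tendsto_exp_atBot.comp tendsto_neg_atTop_atBot
  have h_ratio : Tendsto (fun x => exp (-x) / cosh x) atTop (𝓝 0) :=
    squeeze_zero (fun x => by positivity)
      (fun x => div_le_self (exp_pos _).le (one_le_cosh x)) h_exp
  simpa [h_one_sub] using (tendsto_const_nhds (x := (1 : ℝ))).sub h_ratio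

lemma tendsto_tanh_mul_atTop {c : ℝ} (hc : 0 < c) :
    Tendsto (fun k => tanh (k * c)) atTop (𝓝 1) :=
  tendsto_tanh_atTop.comp (tendsto_id.atTop_mul_const hc)

end Real

section Frequencies

variable {a c : ℝ}

lemma tendsto_cosh_mul_div_cosh_mul (hac : |a| < c) :
    Tendsto (fun k => cosh (k * a) / cosh (k * c)) atTop (𝓝 0) := by
  have hc : 0 < c := (abs_nonneg a).trans_lt hac
  have h_bound : Tendsto (fun k => 2 * exp (k * (|a| - c))) atTop (𝓝 0) := by
    simpa using ((tendsto_exp_atBot.comp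
      (tendsto_id.atTop_mul_const_of_neg (sub_neg.2 hac))).const_mul 2)
  refine squeeze_zero' (Eventually.of_forall fun k => by positivity) ?_ h_bound
  filter_upwards [eventually_ge_atTop 0] with k hk
  calc cosh (k * a) / cosh (k * c) ≤ 2 * exp (|k * a| - |k * c|) := cosh_div_cosh_le _ _
    _ = 2 * exp (k * (|a| - c)) := by
      rw [abs_mul, abs_mul, abs_of_nonneg hk, abs_of_pos hc, mul_sub]

lemma tendsto_sinh_mul_div_cosh_mul (hac : |a| < c) :
    Tendsto (fun k => sinh (k * a) / cosh (k * c)) atTop (𝓝 0) := by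
  refine squeeze_zero_norm (fun k => ?_) (tendsto_cosh_mul_div_cosh_mul hac)
  rw [norm_div, norm_of_nonneg (cosh_pos _).le, Real.norm_eq_abs]
  gcongr
  exact abs_sinh_le_cosh _

variable {d h : ℝ}

lemma abs_sub_two_mul_lt (hh : 0 < h) (hhd : h < d) : |d - 2 * h| < d := by
  rw [abs_lt]
  constructor <;> linarith

lemma tendsto_cosh_mul_sinh_div_cosh (hh : 0 < h) (hhd : h < d) :
    Tendsto (fun k => cosh (k * h) * sinh (k * (d - h)) / cosh (k * d)) atTop (𝓝 (1 / 2)) := by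
  have h_sum : ∀ k, cosh (k * h) * sinh (k * (d - h)) / cosh (k * d)
      = (tanh (k * d) + sinh (k * (d - 2 * h)) / cosh (k * d)) / 2 := fun k => by
    rw [cosh_mul_sinh, ← mul_add, ← mul_sub, add_sub_cancel, sub_sub, ← two_mul,
      tanh_eq_sinh_div_cosh]
    ring
  simpa [h_sum] using ((tendsto_tanh_mul_atTop (hh.trans hhd)).add
    (tendsto_sinh_mul_div_cosh_mul (abs_sub_two_mul_lt hh hhd))).div_const 2

lemma tendsto_sinh_mul_sinh_div_cosh (hh : 0 < h) (hhd : h < d) :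
    Tendsto (fun k => sinh (k * h) * sinh (k * (d - h)) / cosh (k * d)) atTop (𝓝 (1 / 2)) := by
  have h_sum : ∀ k, sinh (k * h) * sinh (k * (d - h)) / cosh (k * d)
      = (1 - cosh (k * (d - 2 * h)) / cosh (k * d)) / 2 := fun k => by
    rw [sinh_mul_sinh, ← mul_add, ← mul_sub, add_sub_cancel, sub_sub, ← two_mul]
    field_simp [(cosh_pos (k * d)).ne']
  simpa [h_sum] using
    ((tendsto_const_nhds (x := (1 : ℝ))).sub
      (tendsto_cosh_mul_div_cosh_mul (abs_sub_two_mul_lt hh hhd))).div_const 2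

end Frequencies

lemma tendsto_add_sqrt_div_two_mul {α : Type*} {l : Filter α} {B D C : α → ℝ} {β δ : ℝ}
    (hC : ∀ k, 0 < C k) (hB : Tendsto (fun k => B k / C k) l (𝓝 β))
    (hD : Tendsto (fun k => D k / C k ^ 2) l (𝓝 δ)) :
    Tendsto (fun k => (B k + √(D k)) / (2 * C k)) l (𝓝 ((β + √δ) / 2)) ∧
      Tendsto (fun k => (B k - √(D k)) / (2 * C k)) l (𝓝 ((β - √δ) / 2)) := by
  have h_sqrt : ∀ k, √(D k / C k ^ 2) = √(D k) / C k := fun k => by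
    rw [sqrt_div' _ (sq_nonneg _), sqrt_sq (hC k).le]
  have hS : Tendsto (fun k => √(D k) / C k) l (𝓝 √δ) := by
    simpa only [h_sqrt] using hD.sqrt
  have h_split : ∀ k, ∀ s : ℝ, (B k + s) / (2 * C k) = (B k / C k + s / C k) / 2 :=
    fun k s => by
    field_simp [(hC k).ne']
  constructor
  · simpa only [h_split] using (hB.add hS).div_const 2
  · simpa only [sub_eq_add_neg, h_split, neg_div] using (hB.add hS.neg).div_const 2

lemma tendsto_mul_div_div_self {f g : ℝ → ℝ} {a : ℝ}
    (hfg : Tendsto (fun k => f k / g k) atTop (𝓝 a)) :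
    Tendsto (fun k => k * f k / g k / k) atTop (𝓝 a) := by
  refine hfg.congr' ?_
  filter_upwards [eventually_ne_atTop 0] with k hk
  rw [mul_div_assoc, mul_div_cancel_left₀ _ hk]

theorem nu_asymptotics_general (d h ρ : ℝ) (hh : 0 < h) (hhd : h < d) :
    let b : ℝ → ℝ := fun k => sinh (k*d) + (ρ-1) * cosh (k*h) * sinh (k*(d-h))
    let D : ℝ → ℝ := fun k =>
      (b k)^2 - 4*(ρ-1) * cosh (k*d) * sinh (k*h) * sinh (k*(d-h))
    Tendsto (fun k : ℝ => (k * (b k + Real.sqrt (D k)) / (2 * cosh (k*d))) / k)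
        atTop (nhds ((ρ + 1 + |ρ - 3|) / 4)) ∧
      Tendsto (fun k : ℝ => (k * (b k - Real.sqrt (D k)) / (2 * cosh (k*d))) / k)
        atTop (nhds ((ρ + 1 - |ρ - 3|) / 4)) := by
  intro b D
  have hb_eq : ∀ k, b k / cosh (k * d)
      = tanh (k * d) + (ρ - 1) * (cosh (k * h) * sinh (k * (d - h)) / cosh (k * d)) := fun k => by
    simp only [b, tanh_eq_sinh_div_cosh]
    ring
  have hD_eq : ∀ k, D k / cosh (k * d) ^ 2
      = (b k / cosh (k * d)) ^ 2
        - 4 * (ρ - 1) * (sinh (k * h) * sinh (k * (d - h)) / cosh (k * d)) := fun k => by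
    field_simp [(cosh_pos (k * d)).ne']
    ring
  have hb : Tendsto (fun k => b k / cosh (k * d)) atTop (𝓝 ((ρ + 1) / 2)) := by
    simp only [hb_eq]
    convert (tendsto_tanh_mul_atTop (hh.trans hhd)).add
      ((tendsto_cosh_mul_sinh_div_cosh hh hhd).const_mul (ρ - 1)) using 2
    ring
  have hD : Tendsto (fun k => D k / cosh (k * d) ^ 2) atTop (𝓝 ((|ρ - 3| / 2) ^ 2)) := by
    simp only [hD_eq]
    convert (hb.pow 2).sub ((tendsto_sinh_mul_sinh_div_cosh hh hhd).const_mul (4 * (ρ - 1)))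
      using 2
    rw [div_pow, sq_abs]
    ring
  obtain ⟨h_plus, h_minus⟩ := tendsto_add_sqrt_div_two_mul (fun k => cosh_pos (k * d)) hb hD
  rw [sqrt_sq (by positivity)] at h_plus h_minus
  constructor
  · convert tendsto_mul_div_div_self h_plus using 2
    ring
  · convert tendsto_mul_div_div_self h_minus using 2
    ring

theorem nu_asymptotics (d h ρ : ℝ) (hd : 0 < d) (hh : 0 < h) (hhd : h < d)
    (hρ : 1 < ρ) :
    let b : ℝ → ℝ := fun k => sinh (k*d) + (ρ-1) * cosh (k*h) * sinh (k*(d-h))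
    let D : ℝ → ℝ := fun k =>
      (b k)^2 - 4*(ρ-1) * cosh (k*d) * sinh (k*h) * sinh (k*(d-h))
    Tendsto (fun k : ℝ => (k * (b k + Real.sqrt (D k)) / (2 * cosh (k*d))) / k)
        atTop (nhds ((ρ + 1 + |ρ - 3|) / 4)) ∧
      Tendsto (fun k : ℝ => (k * (b k - Real.sqrt (D k)) / (2 * cosh (k*d))) / k)
        atTop (nhds ((ρ + 1 - |ρ - 3|) / 4)) :=
  nu_asymptotics_general d h ρ hh hhd
end

section
/- Under the hypotheses of the preceding reduction (i.e., (ρ−1)·sinh(k₁h)·sinh(k₁(d−h)) = (ν_N·ν₁/k₁²)·cosh(k₁d) and (ρ−1)·cosh(k₁h)·sinh(k₁(d−h)) = ((ν_N+ν₁)/k₁)·cosh(k₁d) − sinh(k₁d), with ρ>1, 0<h<d, k₁>0, ν₁,ν_N>0), one has tanh(k₁h) = ν_N·ν₁ / (k₁·(ν_N + ν₁ − ν₁^W)), where ν₁^W = k₁·tanh(k₁d). Consequently, if 0 < ν_N·ν₁/(k₁·(ν_N+ν₁−ν₁^W)) < tanh(k₁d), then h is uniquely determined as h = (1/k₁)·artanh(ν_N·ν₁/(k₁·(ν_N+ν₁−ν₁^W))).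 -/
/-! Dividing the first relation by the second eliminates the unknown factor
`(ρ - 1) sinh (k₁ (d - h))`, which is positive because `ρ > 1` and `h < d`; dividing numerator and
denominator of the resulting quotient by `cosh (k₁ d)` gives the formula for `tanh (k₁ h)`.
Since `tanh` is injective with inverse `artanh`, this determines `h`. -/

open Real

namespace Real

theorem tanh_eq_div_of_mul_sinh_of_mul_cosh {S x a b : ℝ} (hS : S ≠ 0)
    (hs : S * sinh x = a) (hc : S * cosh x = b) : tanh x = a / b := by
  rw [tanh_eq_sinh_div_cosh, ← hs, ← hc, mul_div_mul_left _ _ hS]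

theorem half_log_one_add_tanh_div_one_sub_tanh (x : ℝ) :
    1 / 2 * log ((1 + tanh x) / (1 - tanh x)) = x := by
  rw [← artanh_eq_half_log ⟨(neg_one_lt_tanh x).le, (tanh_lt_one x).le⟩, artanh_tanh]

end Real

theorem interface_depth_recovery_general (k₁ d h ρ ν₁ νN : ℝ) (hk : 0 < k₁)
    (hhd : h < d) (hρ : 1 < ρ)
    (heq1 : (ρ-1) * sinh (k₁*h) * sinh (k₁*(d-h))
      = (νN * ν₁ / k₁^2) * cosh (k₁*d))
    (heq2 : (ρ-1) * cosh (k₁*h) * sinh (k₁*(d-h))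
      = ((νN + ν₁) / k₁) * cosh (k₁*d) - sinh (k₁*d)) :
    tanh (k₁*h) = νN * ν₁ / (k₁ * (νN + ν₁ - k₁ * tanh (k₁*d))) ∧
      (0 < νN * ν₁ / (k₁ * (νN + ν₁ - k₁ * tanh (k₁*d))) →
        νN * ν₁ / (k₁ * (νN + ν₁ - k₁ * tanh (k₁*d))) < tanh (k₁*d) →
        h = (1/k₁) * ((1/2) * Real.log ((1 + νN * ν₁ / (k₁ * (νN + ν₁ - k₁ * tanh (k₁*d)))) / (1 - νN * ν₁ / (k₁ * (νN + ν₁ - k₁ * tanh (k₁*d))))))) := by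
  have hS : (ρ - 1) * sinh (k₁ * (d - h)) ≠ 0 :=
    (mul_pos (sub_pos.2 hρ) (sinh_pos_iff.2 (mul_pos hk (sub_pos.2 hhd)))).ne'
  have key : tanh (k₁*h) = νN * ν₁ / (k₁ * (νN + ν₁ - k₁ * tanh (k₁*d))) := by
    rw [tanh_eq_div_of_mul_sinh_of_mul_cosh hS ((mul_right_comm _ _ _).trans heq1)
      ((mul_right_comm _ _ _).trans heq2), tanh_eq_sinh_div_cosh]
    have hC := (cosh_pos (k₁ * d)).ne'
    field_simp
  refine ⟨key, fun _ _ => ?_⟩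
  rw [← key, half_log_one_add_tanh_div_one_sub_tanh]
  field_simp

theorem interface_depth_recovery (k₁ d h ρ ν₁ νN : ℝ) (hk : 0 < k₁) (hd : 0 < d)
    (hh : 0 < h) (hhd : h < d) (hρ : 1 < ρ) (hν₁ : 0 < ν₁) (hνN : 0 < νN)
    (heq1 : (ρ-1) * sinh (k₁*h) * sinh (k₁*(d-h))
      = (νN * ν₁ / k₁^2) * cosh (k₁*d))
    (heq2 : (ρ-1) * cosh (k₁*h) * sinh (k₁*(d-h))
      = ((νN + ν₁) / k₁) * cosh (k₁*d) - sinh (k₁*d)) :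
    tanh (k₁*h) = νN * ν₁ / (k₁ * (νN + ν₁ - k₁ * tanh (k₁*d))) ∧
      (0 < νN * ν₁ / (k₁ * (νN + ν₁ - k₁ * tanh (k₁*d))) →
        νN * ν₁ / (k₁ * (νN + ν₁ - k₁ * tanh (k₁*d))) < tanh (k₁*d) →
        h = (1/k₁) * ((1/2) * Real.log ((1 + νN * ν₁ / (k₁ * (νN + ν₁ - k₁ * tanh (k₁*d)))) / (1 - νN * ν₁ / (k₁ * (νN + ν₁ - k₁ * tanh (k₁*d))))))) :=
  interface_depth_recovery_general k₁ d h ρ ν₁ νN hk hhd hρ heq1 heq2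
end

section
/- With U defined as above and the same hypotheses (0 < k₁ < k_N, 0 < ν_j < ν_j^W = k_j·tanh(k_jd) for j=1,N), one has U(h) = (d−h)·(ν_N^W − ν_N)·(ν₁^W − ν₁)·[ν₁·k_N/k₁ − ν_N·k₁/k_N]·cosh(k_Nd)·cosh(k₁d) + o(d−h) as h → d⁻. -/
open Real Filter Asymptotics

/-!
Both terms of `U` carry a factor `sinh (k * (d - h))`, so `U d = 0`, and differentiating that
factor at `h = d` gives `-k`. Together with `k * sinh (k * d) - ν * cosh (k * d) =
cosh (k * d) * (k * tanh (k * d) - ν)` this yields `U' d = -C`, and the claim is the first-order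
Taylor expansion of `U` at `d`.
-/

theorem HasDerivAt.isLittleO_sub_smul_of_eq_zero {𝕜 E : Type*} [NontriviallyNormedField 𝕜]
    [NormedAddCommGroup E] [NormedSpace 𝕜 E] {f : 𝕜 → E} {C : E} {a : 𝕜}
    (hf : HasDerivAt f (-C) a) (hfa : f a = 0) :
    (fun x => f x - (a - x) • C) =o[nhds a] fun x => a - x := by
  have h := hf.isLittleO.neg_right
  simp only [hfa, sub_zero, smul_neg, sub_neg_eq_add, neg_sub] at h
  refine h.congr_left fun x => ?_
  rw [← neg_sub x a, neg_smul, sub_neg_eq_add]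

theorem mul_sinh_sub_mul_cosh (k ν x : ℝ) :
    k * sinh x - ν * cosh x = cosh x * (k * tanh x - ν) := by
  rw [tanh_eq_sinh_div_cosh]
  field_simp [(cosh_pos x).ne']

theorem hasDerivAt_const_mul_sinh_mul_sub_mul (c k d : ℝ) {g : ℝ → ℝ}
    (hg : DifferentiableAt ℝ g d) :
    HasDerivAt (fun h => c * sinh (k * (d - h)) * g h) (-(c * k * g d)) d := by
  have hsinh : HasDerivAt (fun h => sinh (k * (d - h))) (cosh (k * (d - d)) * (k * (0 - 1))) d :=
    (hasDerivAt_sinh _).comp d (((hasDerivAt_const d d).sub (hasDerivAt_id d)).const_mul k)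
  refine ((hsinh.const_mul c).mul hg.hasDerivAt).congr_deriv ?_
  simp only [sub_self, mul_zero, sinh_zero, cosh_zero, zero_mul, add_zero]
  ring

theorem U_asymptotics_at_d_general (k₁ kN d ν₁ νN : ℝ) :
    let U : ℝ → ℝ := fun h =>
      (ν₁/k₁) * (k₁ * tanh (k₁*d) - ν₁) * cosh (k₁*d) * sinh (kN*(d-h))
          * (kN * sinh (kN*h) - νN * cosh (kN*h))
        - (νN/kN) * (kN * tanh (kN*d) - νN) * cosh (kN*d) * sinh (k₁*(d-h))
          * (k₁ * sinh (k₁*h) - ν₁ * cosh (k₁*h))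
    let C : ℝ := (kN * tanh (kN*d) - νN) * (k₁ * tanh (k₁*d) - ν₁)
        * (ν₁ * kN / k₁ - νN * k₁ / kN) * cosh (kN*d) * cosh (k₁*d)
    (fun h => U h - (d - h) * C) =o[nhdsWithin d (Set.Iio d)] (fun h => d - h) := by
  intro U C
  have hU : HasDerivAt U (-C) d := by
    refine ((hasDerivAt_const_mul_sinh_mul_sub_mul _ kN d (by fun_prop)).sub
      (hasDerivAt_const_mul_sinh_mul_sub_mul _ k₁ d (by fun_prop))).congr_deriv ?_
    simp only [C, mul_sinh_sub_mul_cosh]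
    ring
  have hUd : U d = 0 := by simp [U]
  exact (hU.isLittleO_sub_smul_of_eq_zero hUd).mono nhdsWithin_le_nhds

theorem U_asymptotics_at_d (k₁ kN d ν₁ νN : ℝ) (hk₁ : 0 < k₁) (hkN : k₁ < kN)
    (hd : 0 < d) (hν₁ : 0 < ν₁) (hν₁W : ν₁ < k₁ * tanh (k₁*d))
    (hνN : 0 < νN) (hνNW : νN < kN * tanh (kN*d)) :
    let U : ℝ → ℝ := fun h =>
      (ν₁/k₁) * (k₁ * tanh (k₁*d) - ν₁) * cosh (k₁*d) * sinh (kN*(d-h))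
          * (kN * sinh (kN*h) - νN * cosh (kN*h))
        - (νN/kN) * (kN * tanh (kN*d) - νN) * cosh (kN*d) * sinh (k₁*(d-h))
          * (k₁ * sinh (k₁*h) - ν₁ * cosh (k₁*h))
    let C : ℝ := (kN * tanh (kN*d) - νN) * (k₁ * tanh (k₁*d) - ν₁)
        * (ν₁ * kN / k₁ - νN * k₁ / kN) * cosh (kN*d) * cosh (k₁*d)
    (fun h => U h - (d - h) * C) =o[nhdsWithin d (Set.Iio d)] (fun h => d - h) :=
  U_asymptotics_at_d_general k₁ kN d ν₁ νN
end

section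
/- Let 0 < k₁ < k_N, d > 0, 0 < ν₁ < ν₁^W, 0 < ν_N < ν_N^W with ν_j^W = k_j·tanh(k_jd). If ν₁·k_N/k₁ − ν_N·k₁/k_N ≤ 0, then U(0) < 0 and there exists δ > 0 such that U(h) < 0 for all h ∈ (d−δ, d), where U is the function from the inverse sloshing problem. Consequently, the number of zeros of U in (0,d) is not equal to one (U has either no zero or at least two zeros in (0,d), counting the behavior of the continuous function U which vanishes at d). -/
open Real Set

/-!
Substituting `ν_j = c_j k_j²` gives `U(h) = K (G(c_N, k_N; h) / c_N - G(c₁, k₁; h) / c₁)` with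
`K > 0`, where `G(c, k; h) = robinGreen c d k h` is the diagonal value at `h` of the Green's
function of `-u'' + k² u` on `[0, d]` with boundary conditions `u(0) + c u'(0) = 0` and `u(d) = 0`;
the hypothesis `ν₁ k_N / k₁ ≤ ν_N k₁ / k_N` says exactly `c₁ ≤ c_N`. A direct computation shows that
`G / c` is antitone in `c`, and that `∂G/∂k = -2k ∫₀ᵈ G(h, s)² ds < 0`. Hence `U < 0` on all of
`[0, d)`, so `U` has no zero in `(0, d)`.
-/

/-- `sinh (k x) - c k cosh (k x)` solves `u'' = k² u` with `u(0) + c u'(0) = 0`. -/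
noncomputable def robinSol (c k x : ℝ) : ℝ := sinh (k * x) - c * k * cosh (k * x)

/-- The denominator `k * robinSol c k d` is, up to sign, the Wronskian of `robinSol c k` and
`sinh (k (d - ·))`. -/
noncomputable def robinGreen (c d k h : ℝ) : ℝ :=
  sinh (k * (d - h)) * robinSol c k h / (k * robinSol c k d)

/-- Closed form of `∫₀ʰ (robinSol c k s)² ds`. -/
noncomputable def robinSolSqIntegral (c k h : ℝ) : ℝ :=
  (1 + c ^ 2 * k ^ 2) * sinh (k * h) * cosh (k * h) / (2 * k) - c * sinh (k * h) ^ 2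
    + (c ^ 2 * k ^ 2 - 1) * h / 2

lemma strictConvexOn_sinh : StrictConvexOn ℝ (Ici 0) sinh := by
  refine strictConvexOn_of_deriv2_pos (convex_Ici 0) continuous_sinh.continuousOn fun x hx ↦ ?_
  have hsinh : deriv^[2] sinh = sinh := by
    simp [Function.iterate_succ, Real.deriv_sinh, Real.deriv_cosh]
  rw [interior_Ici] at hx
  simpa [hsinh] using hx

lemma mul_sinh_lt_mul_sinh {a b : ℝ} (ha : 0 < a) (hab : a < b) : b * sinh a < a * sinh b := by
  have h := strictConvexOn_sinh.secant_strict_mono (a := 0) self_mem_Ici ha.le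
    (ha.trans hab).le ha.ne' (ha.trans hab).ne' hab
  simp only [sinh_zero, sub_zero] at h
  rw [div_lt_div_iff₀ ha (ha.trans hab)] at h
  linarith

lemma mul_tanh_lt_mul_tanh {a b : ℝ} (ha : 0 < a) (hab : a < b) : a * tanh b < b * tanh a := by
  have h := mul_sinh_lt_mul_sinh (sub_pos.2 hab) (by linarith : b - a < b + a)
  rw [sinh_sub, sinh_add] at h
  rw [tanh_eq_sinh_div_cosh, tanh_eq_sinh_div_cosh, mul_div_assoc', mul_div_assoc',
    div_lt_div_iff₀ (cosh_pos b) (cosh_pos a)]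
  linarith

lemma robinSol_eq (c k x : ℝ) : robinSol c k x = cosh (k * x) * (tanh (k * x) - c * k) := by
  rw [robinSol, tanh_eq_sinh_div_cosh]
  field_simp

lemma robinSol_pos_iff {c k x : ℝ} : 0 < robinSol c k x ↔ c * k < tanh (k * x) := by
  rw [robinSol_eq, mul_pos_iff_of_pos_left (cosh_pos _), sub_pos]

lemma robinSol_pos_of_le {c k β x : ℝ} (hk : 0 < k) (hkβ : k ≤ β) (hx : 0 < x)
    (hβ : 0 < robinSol c β x) : 0 < robinSol c k x := by
  rcases hkβ.eq_or_lt with rfl | hlt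
  · exact hβ
  rw [robinSol_pos_iff] at hβ ⊢
  have h := mul_tanh_lt_mul_tanh (mul_pos hk hx) (mul_lt_mul_of_pos_right hlt hx)
  have h' : k * tanh (β * x) < β * tanh (k * x) := by nlinarith
  nlinarith [mul_lt_mul_of_pos_left hβ hk]

lemma robinSolSqIntegral_pos (c : ℝ) {k h : ℝ} (hk : 0 < k) (hh : 0 < h) :
    0 < robinSolSqIntegral c k h := by
  set t := k * h
  have ht : 0 < t := mul_pos hk hh
  have hS : t < sinh t := self_lt_sinh_iff.2 ht
  have hSC : 0 < sinh t * cosh t + t := by nlinarith [cosh_pos t, one_le_cosh t]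
  have hJ : 2 * k * robinSolSqIntegral c k h
      = (1 + (c * k) ^ 2) * sinh t * cosh t - 2 * (c * k) * sinh t ^ 2 + ((c * k) ^ 2 - 1) * t := by
    unfold robinSolSqIntegral; field_simp; ring
  -- the factor `sinh t * cosh t + t` turns `2 k ∫₀ʰ (robinSol c k s)² ds` into a sum of squares
  have hsos : (sinh t * cosh t + t) * (2 * k * robinSolSqIntegral c k h)
      = ((sinh t * cosh t + t) * (c * k) - sinh t ^ 2) ^ 2 + (sinh t ^ 2 - t ^ 2) := by
    rw [hJ]; linear_combination sinh t ^ 2 * cosh_sq t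
  have : 0 < (sinh t * cosh t + t) * (2 * k * robinSolSqIntegral c k h) := by
    rw [hsos]; nlinarith [sq_nonneg ((sinh t * cosh t + t) * (c * k) - sinh t ^ 2)]
  exact pos_of_mul_pos_right (pos_of_mul_pos_right this hSC.le) (by positivity)

lemma hasDerivAt_robinSol (c k x : ℝ) :
    HasDerivAt (fun k ↦ robinSol c k x)
      (x * cosh (k * x) - c * cosh (k * x) - c * k * x * sinh (k * x)) k :=
  ((hasDerivAt_mul_const x).sinh.sub
    (((hasDerivAt_id k).const_mul c).mul (hasDerivAt_mul_const x).cosh)).congr_deriv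
    (by simp only [id]; ring)

lemma hasDerivAt_robinGreen {c d h k : ℝ} (hk : k ≠ 0) (hD : robinSol c k d ≠ 0) :
    HasDerivAt (fun k ↦ robinGreen c d k h)
      (-2 * (sinh (k * (d - h)) ^ 2 * robinSolSqIntegral c k h
          + robinSol c k h ^ 2 * robinSolSqIntegral 0 k (d - h)) / (k * robinSol c k d ^ 2)) k := by
  refine (((hasDerivAt_mul_const (d - h)).sinh.mul (hasDerivAt_robinSol c k h)).div
    ((hasDerivAt_id k).mul (hasDerivAt_robinSol c k d)) (mul_ne_zero hk hD)).congr_deriv ?_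
  simp only [Pi.mul_apply, id]
  unfold robinSol at hD ⊢
  unfold robinSolSqIntegral
  rw [show k * (d - h) = k * d - k * h by ring, sinh_sub, cosh_sub, sinh_eq (k * d),
    cosh_eq (k * d), sinh_eq (k * h), cosh_eq (k * h), exp_neg, exp_neg] at *
  field_simp
  ring

lemma sinh_sq_mul_robinSolSqIntegral_add_pos {c d h k : ℝ} (hc : 0 < c) (hk : 0 < k)
    (hh : 0 ≤ h) (hhd : h < d) :
    0 < sinh (k * (d - h)) ^ 2 * robinSolSqIntegral c k h
      + robinSol c k h ^ 2 * robinSolSqIntegral 0 k (d - h) := by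
  have hI : 0 < robinSolSqIntegral 0 k (d - h) := robinSolSqIntegral_pos 0 hk (sub_pos.2 hhd)
  rcases hh.eq_or_lt with rfl | hh
  · have hI₀ : robinSolSqIntegral c k 0 = 0 := by simp [robinSolSqIntegral]
    have hv₀ : robinSol c k 0 ^ 2 = (c * k) ^ 2 := by simp [robinSol]
    rw [hI₀, hv₀, mul_zero, zero_add]
    exact mul_pos (pow_pos (mul_pos hc hk) 2) hI
  · have hw : 0 < sinh (k * (d - h)) := sinh_pos_iff.2 (mul_pos hk (sub_pos.2 hhd))
    exact add_pos_of_pos_of_nonneg (mul_pos (pow_pos hw 2) (robinSolSqIntegral_pos c hk hh))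
      (mul_nonneg (sq_nonneg _) hI.le)

lemma robinGreen_strictAntiOn {c d h α β : ℝ} (hc : 0 < c) (hh : 0 ≤ h) (hhd : h < d)
    (hα : 0 < α) (hβ : 0 < robinSol c β d) :
    StrictAntiOn (fun k ↦ robinGreen c d k h) (Icc α β) := by
  have hpos : ∀ k ∈ Icc α β, 0 < k ∧ 0 < robinSol c k d := fun k hk ↦
    ⟨hα.trans_le hk.1, robinSol_pos_of_le (hα.trans_le hk.1) hk.2 (hh.trans_lt hhd) hβ⟩
  refine strictAntiOn_of_deriv_neg (convex_Icc α β) (fun k hk ↦ ?_) fun k hk ↦ ?_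
  · obtain ⟨hk0, hD⟩ := hpos k hk
    exact (hasDerivAt_robinGreen hk0.ne' hD.ne').continuousAt.continuousWithinAt
  · rw [interior_Icc] at hk
    obtain ⟨hk0, hD⟩ := hpos k (Ioo_subset_Icc_self hk)
    rw [(hasDerivAt_robinGreen hk0.ne' hD.ne').deriv]
    have := sinh_sq_mul_robinSolSqIntegral_add_pos hc hk0 hh hhd
    exact div_neg_of_neg_of_pos (by linarith) (by positivity)

lemma robinGreen_div_antitone {c c' d h k : ℝ} (hk : 0 < k) (hh : 0 ≤ h) (hhd : h ≤ d)
    (hc : 0 < c) (hcc : c ≤ c') (hD' : 0 < robinSol c' k d) :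
    robinGreen c' d k h / c' ≤ robinGreen c d k h / c := by
  have hc' : 0 < c' := hc.trans_le hcc
  have hSh : 0 ≤ sinh (k * h) := sinh_nonneg_iff.2 (by positivity)
  have hw : 0 ≤ sinh (k * (d - h)) := sinh_nonneg_iff.2 (mul_nonneg hk.le (sub_nonneg.2 hhd))
  have hw_eq : sinh (k * (d - h)) = sinh (k * d) * cosh (k * h) - cosh (k * d) * sinh (k * h) := by
    rw [mul_sub, sinh_sub]
  have hD : 0 < robinSol c k d := by
    unfold robinSol at hD' ⊢
    nlinarith [mul_le_mul_of_nonneg_right hcc (mul_nonneg hk.le (cosh_pos (k * d)).le)]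
  set E := sinh (k * h) * sinh (k * d) - (c + c') * k * sinh (k * h) * cosh (k * d)
    + c * c' * k ^ 2 * cosh (k * h) * cosh (k * d)
  have hcross : c' * robinSol c k h * robinSol c' k d - c * robinSol c' k h * robinSol c k d
      = (c' - c) * E := by
    unfold robinSol; ring
  have hE : 0 ≤ c' * cosh (k * h) * E := by
    have : c' * cosh (k * h) * E = (c' - c) * cosh (k * h) * sinh (k * h) * robinSol c' k d
        + c * sinh (k * h) * sinh (k * (d - h)) + c * cosh (k * d) * robinSol c' k h ^ 2 := by
      rw [hw_eq]; unfold robinSol; ring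
    rw [this]
    have := cosh_pos (k * h)
    have := cosh_pos (k * d)
    have := sub_nonneg.2 hcc
    positivity
  have hratio :
      robinSol c' k h / (c' * robinSol c' k d) ≤ robinSol c k h / (c * robinSol c k d) := by
    rw [div_le_div_iff₀ (by positivity) (by positivity)]
    linarith [hcross, mul_nonneg (sub_nonneg.2 hcc) (nonneg_of_mul_nonneg_right hE (by positivity))]
  have hsplit : ∀ c, robinGreen c d k h / c
      = sinh (k * (d - h)) / k * (robinSol c k h / (c * robinSol c k d)) := fun c ↦ by
    unfold robinGreen; ring
  rw [hsplit, hsplit]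
  exact mul_le_mul_of_nonneg_left hratio (div_nonneg hw hk.le)

lemma mul_tanh_sub_mul_cosh_eq {c d k : ℝ} (hk : k ≠ 0) :
    c * k ^ 2 / k * (k * tanh (k * d) - c * k ^ 2) * cosh (k * d) = c * k ^ 2 * robinSol c k d := by
  rw [robinSol_eq]
  field_simp

lemma mul_sinh_sub_mul_cosh_eq (c k h : ℝ) :
    k * sinh (k * h) - c * k ^ 2 * cosh (k * h) = k * robinSol c k h := by
  unfold robinSol; ring

lemma sloshing_U_neg {k₁ kN d ν₁ νN h : ℝ} (hk₁ : 0 < k₁) (hkN : k₁ < kN)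
    (hν₁ : 0 < ν₁) (hν₁W : ν₁ < k₁ * tanh (k₁ * d)) (hνN : 0 < νN) (hνNW : νN < kN * tanh (kN * d))
    (hineq : ν₁ * kN / k₁ - νN * k₁ / kN ≤ 0) (hh : 0 ≤ h) (hhd : h < d) :
    (ν₁ / k₁) * (k₁ * tanh (k₁ * d) - ν₁) * cosh (k₁ * d) * sinh (kN * (d - h))
        * (kN * sinh (kN * h) - νN * cosh (kN * h))
      - (νN / kN) * (kN * tanh (kN * d) - νN) * cosh (kN * d) * sinh (k₁ * (d - h))
        * (k₁ * sinh (k₁ * h) - ν₁ * cosh (k₁ * h)) < 0 := by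
  have hkN0 : 0 < kN := hk₁.trans hkN
  obtain ⟨c₁, hc₁, rfl⟩ : ∃ c > 0, ν₁ = c * k₁ ^ 2 := ⟨ν₁ / k₁ ^ 2, by positivity, by field_simp⟩
  obtain ⟨cN, hcN, rfl⟩ : ∃ c > 0, νN = c * kN ^ 2 := ⟨νN / kN ^ 2, by positivity, by field_simp⟩
  have hc : c₁ ≤ cN := by
    have : c₁ * k₁ ^ 2 * kN / k₁ - cN * kN ^ 2 * k₁ / kN = (c₁ - cN) * (k₁ * kN) := by
      field_simp
    nlinarith [mul_pos hk₁ hkN0]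
  have hD₁ : 0 < robinSol c₁ k₁ d := robinSol_pos_iff.2 (by nlinarith)
  have hDN : 0 < robinSol cN kN d := robinSol_pos_iff.2 (by nlinarith)
  have hD₁N : 0 < robinSol c₁ kN d := robinSol_pos_iff.2 (by nlinarith [robinSol_pos_iff.1 hDN])
  have hmono_c := robinGreen_div_antitone hkN0 hh hhd.le hc₁ hc hDN
  have hmono_k : robinGreen c₁ d kN h < robinGreen c₁ d k₁ h :=
    robinGreen_strictAntiOn hc₁ hh hhd hk₁ hD₁N ⟨le_rfl, hkN.le⟩ ⟨hkN.le, le_rfl⟩ hkN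
  have hU : (c₁ * k₁ ^ 2 / k₁) * (k₁ * tanh (k₁ * d) - c₁ * k₁ ^ 2) * cosh (k₁ * d)
        * sinh (kN * (d - h)) * (kN * sinh (kN * h) - cN * kN ^ 2 * cosh (kN * h))
      - (cN * kN ^ 2 / kN) * (kN * tanh (kN * d) - cN * kN ^ 2) * cosh (kN * d)
        * sinh (k₁ * (d - h)) * (k₁ * sinh (k₁ * h) - c₁ * k₁ ^ 2 * cosh (k₁ * h))
      = c₁ * cN * k₁ ^ 2 * kN ^ 2 * robinSol c₁ k₁ d * robinSol cN kN d
        * (robinGreen cN d kN h / cN - robinGreen c₁ d k₁ h / c₁) := by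
    rw [mul_tanh_sub_mul_cosh_eq hk₁.ne', mul_tanh_sub_mul_cosh_eq hkN0.ne',
      mul_sinh_sub_mul_cosh_eq, mul_sinh_sub_mul_cosh_eq]
    unfold robinGreen
    field_simp
  rw [hU]
  exact mul_neg_of_pos_of_neg (by positivity)
    (by linarith [hmono_c, div_lt_div_of_pos_right hmono_k hc₁])

theorem U_no_unique_zero (k₁ kN d ν₁ νN : ℝ) (hk₁ : 0 < k₁) (hkN : k₁ < kN)
    (hd : 0 < d) (hν₁ : 0 < ν₁) (hν₁W : ν₁ < k₁ * tanh (k₁*d))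
    (hνN : 0 < νN) (hνNW : νN < kN * tanh (kN*d))
    (hineq : ν₁ * kN / k₁ - νN * k₁ / kN ≤ 0) :
    let U : ℝ → ℝ := fun h =>
      (ν₁/k₁) * (k₁ * tanh (k₁*d) - ν₁) * cosh (k₁*d) * sinh (kN*(d-h))
          * (kN * sinh (kN*h) - νN * cosh (kN*h))
        - (νN/kN) * (kN * tanh (kN*d) - νN) * cosh (kN*d) * sinh (k₁*(d-h))
          * (k₁ * sinh (k₁*h) - ν₁ * cosh (k₁*h))
    U 0 < 0 ∧
      (∃ δ > 0, ∀ h : ℝ, d - δ < h → h < d → U h < 0) ∧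
      ¬ ({h : ℝ | h ∈ Set.Ioo 0 d ∧ U h = 0}.ncard = 1) := by
  intro U
  have hU : ∀ h, 0 ≤ h → h < d → U h < 0 := fun h hh hhd ↦
    sloshing_U_neg hk₁ hkN hν₁ hν₁W hνN hνNW hineq hh hhd
  have hzeros : {h : ℝ | h ∈ Set.Ioo 0 d ∧ U h = 0} = ∅ :=
    eq_empty_of_forall_notMem fun h ⟨⟨hh, hhd⟩, hUh⟩ ↦ (hU h hh.le hhd).ne hUh
  refine ⟨hU 0 le_rfl hd, ⟨d, hd, fun h hdh hhd ↦ hU h (by linarith) hhd⟩, ?_⟩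
  rw [hzeros, ncard_empty]
  exact zero_ne_one
end

section
/- Let 0 < k₁ < k_N, d > 0, 0 < ν₁ < ν₁^W, ν₁ < ν_N < ν_N^W with ν_j^W = k_j·tanh(k_jd), and suppose ν_N^W·ν₁ = ν_N·ν₁^W and ν₁·k_N/k₁ − ν_N·k₁/k_N > 0. Then U(0) = 0 and U(h) > 0 for all sufficiently small h > 0; indeed U(h) = h·(ν_N^W·ν₁^W − ν_N·ν₁)·(ν₁·k_N/k₁ − ν_N·k₁/k_N)·cosh(k_Nd)·cosh(k₁d) + o(h) as h → 0⁺, with positive leading coefficient. -/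
/-!
Write `U = a P_N - b P_1` with `P_j h = sinh (k_j (d - h)) (k_j sinh (k_j h) - ν_j cosh (k_j h))`.
Since `P_j 0 = -ν_j sinh (k_j d)`, the relation `ν_N^W ν₁ = ν_N ν₁^W` is exactly `U 0 = 0`, and
the same relation reduces `U' 0` to the product `C`, which is positive because `ν_j < ν_j^W`.
A function vanishing at `0` with positive derivative there is positive on some `(0, δ)`, and the
little-o statement is the definition of the derivative.
-/

open Real Filter Asymptotics Topology Set

lemma exists_pos_on_Ioo_of_hasDerivAt_of_eq_zero {f : ℝ → ℝ} {c x₀ : ℝ}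
    (hf : HasDerivAt f c x₀) (hc : 0 < c) (hx₀ : f x₀ = 0) :
    ∃ δ > 0, ∀ x ∈ Ioo x₀ (x₀ + δ), 0 < f x := by
  have hsign := eventually_nhdsWithin_sign_eq_of_deriv_pos (hf.deriv ▸ hc) hx₀
  obtain ⟨δ, hδ, hball⟩ := Metric.eventually_nhds_iff.mp hsign
  refine ⟨δ, hδ, fun x ⟨hlt, hlt'⟩ => ?_⟩
  have hdist : dist x x₀ < δ := by rw [Real.dist_eq, abs_of_pos (sub_pos.2 hlt)]; linarith
  rw [← sign_eq_one_iff, hball hdist, sign_pos (sub_pos.2 hlt)]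

lemma isLittleO_sub_mul_of_hasDerivAt_zero {f : ℝ → ℝ} {c : ℝ}
    (hf : HasDerivAt f c 0) (h0 : f 0 = 0) :
    (fun h => f h - h * c) =o[𝓝 0] fun h => h := by
  simpa [h0] using hasDerivAt_iff_isLittleO_nhds_zero.mp hf

lemma sinh_eq_tanh_mul_cosh (x : ℝ) : sinh x = tanh x * cosh x := by
  rw [tanh_eq_sinh_div_cosh, div_mul_cancel₀ _ (cosh_pos x).ne']

noncomputable def layerProfile (k ν d h : ℝ) : ℝ :=
  sinh (k * (d - h)) * (k * sinh (k * h) - ν * cosh (k * h))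

lemma layerProfile_zero (k ν d : ℝ) : layerProfile k ν d 0 = -(ν * sinh (k * d)) := by
  simp [layerProfile, mul_comm]

lemma hasDerivAt_layerProfile_zero (k ν d : ℝ) :
    HasDerivAt (layerProfile k ν d) (k * (ν * cosh (k * d) + k * sinh (k * d))) 0 := by
  have hlin : HasDerivAt (fun h : ℝ => k * h) k 0 := by
    simpa using (hasDerivAt_id (0 : ℝ)).const_mul k
  have hrefl : HasDerivAt (fun h : ℝ => k * (d - h)) (-k) 0 := by
    simpa using ((hasDerivAt_id (0 : ℝ)).const_sub d).const_mul k
  have h := hrefl.sinh.fun_mul ((hlin.sinh.const_mul k).fun_sub (hlin.cosh.const_mul ν))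
  simp only [mul_zero, sub_zero, sinh_zero, cosh_zero] at h
  refine h.congr_deriv ?_
  ring

/-! In the next two identities `t_j` and `c_j` stand for `tanh (k_j d)` and `cosh (k_j d)`. -/

lemma layer_combination_value_eq_zero {k₁ kN ν₁ νN t₁ tN c₁ cN : ℝ} (hk₁ : k₁ ≠ 0)
    (hkN : kN ≠ 0) (hprod : kN * tN * ν₁ = νN * (k₁ * t₁)) :
    ν₁ / k₁ * (k₁ * t₁ - ν₁) * c₁ * -(νN * (tN * cN))
      - νN / kN * (kN * tN - νN) * cN * -(ν₁ * (t₁ * c₁)) = 0 := by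
  field_simp
  linear_combination (ν₁ * νN * c₁ * cN) * hprod

lemma layer_combination_deriv_eq {k₁ kN ν₁ νN t₁ tN c₁ cN : ℝ} (hk₁ : k₁ ≠ 0)
    (hkN : kN ≠ 0) (hprod : kN * tN * ν₁ = νN * (k₁ * t₁)) :
    ν₁ / k₁ * (k₁ * t₁ - ν₁) * c₁ * (kN * (νN * cN + kN * (tN * cN)))
      - νN / kN * (kN * tN - νN) * cN * (k₁ * (ν₁ * c₁ + k₁ * (t₁ * c₁)))
      = (kN * tN * (k₁ * t₁) - νN * ν₁) * (ν₁ * kN / k₁ - νN * k₁ / kN) * cN * c₁ := by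
  field_simp
  linear_combination -(ν₁ * kN ^ 2 + νN * k₁ ^ 2) * c₁ * cN * hprod

theorem U_asymptotics_at_zero_general (k₁ kN d ν₁ νN : ℝ) (hk₁ : 0 < k₁) (hkN : k₁ < kN)
    (hν₁ : 0 < ν₁) (hν₁W : ν₁ < k₁ * tanh (k₁*d))
    (hν₁N : ν₁ < νN) (hνNW : νN < kN * tanh (kN*d))
    (hprod : (kN * tanh (kN*d)) * ν₁ = νN * (k₁ * tanh (k₁*d)))
    (hineq : 0 < ν₁ * kN / k₁ - νN * k₁ / kN) :
    let U : ℝ → ℝ := fun h =>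
      (ν₁/k₁) * (k₁ * tanh (k₁*d) - ν₁) * cosh (k₁*d) * sinh (kN*(d-h))
          * (kN * sinh (kN*h) - νN * cosh (kN*h))
        - (νN/kN) * (kN * tanh (kN*d) - νN) * cosh (kN*d) * sinh (k₁*(d-h))
          * (k₁ * sinh (k₁*h) - ν₁ * cosh (k₁*h))
    let C : ℝ := ((kN * tanh (kN*d)) * (k₁ * tanh (k₁*d)) - νN * ν₁)
        * (ν₁ * kN / k₁ - νN * k₁ / kN) * cosh (kN*d) * cosh (k₁*d)
    U 0 = 0 ∧ 0 < C ∧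
      (∃ δ > 0, ∀ h : ℝ, 0 < h → h < δ → 0 < U h) ∧
      (fun h => U h - h * C) =o[nhdsWithin 0 (Set.Ioi 0)] (fun h : ℝ => h) := by
  intro U C
  set a := (ν₁/k₁) * (k₁ * tanh (k₁*d) - ν₁) * cosh (k₁*d)
  set b := (νN/kN) * (kN * tanh (kN*d) - νN) * cosh (kN*d)
  have hU : U = fun h => a * layerProfile kN νN d h - b * layerProfile k₁ ν₁ d h := by
    funext h; simp only [U, layerProfile]; ring
  have hk₁₀ : k₁ ≠ 0 := hk₁.ne'
  have hkN₀ : kN ≠ 0 := (hk₁.trans hkN).ne'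
  have hU0 : U 0 = 0 := by
    simp only [hU, layerProfile_zero, sinh_eq_tanh_mul_cosh]
    exact layer_combination_value_eq_zero hk₁₀ hkN₀ hprod
  have hC : 0 < C := by
    have hW : νN * ν₁ < (kN * tanh (kN*d)) * (k₁ * tanh (k₁*d)) :=
      mul_lt_mul'' hνNW hν₁W (hν₁.trans hν₁N).le hν₁.le
    have := mul_pos (sub_pos.2 hW) hineq
    positivity
  have hderiv : HasDerivAt U C 0 := by
    have h := ((hasDerivAt_layerProfile_zero kN νN d).const_mul a).fun_sub
      ((hasDerivAt_layerProfile_zero k₁ ν₁ d).const_mul b)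
    rw [hU]
    refine h.congr_deriv ?_
    simp only [sinh_eq_tanh_mul_cosh]
    exact layer_combination_deriv_eq hk₁₀ hkN₀ hprod
  obtain ⟨δ, hδ, hpos⟩ := exists_pos_on_Ioo_of_hasDerivAt_of_eq_zero hderiv hC hU0
  refine ⟨hU0, hC, ⟨δ, hδ, fun h h0 hδ' => hpos h ⟨h0, by rwa [zero_add]⟩⟩, ?_⟩
  exact (isLittleO_sub_mul_of_hasDerivAt_zero hderiv hU0).mono nhdsWithin_le_nhds

theorem U_asymptotics_at_zero (k₁ kN d ν₁ νN : ℝ) (hk₁ : 0 < k₁) (hkN : k₁ < kN)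
    (hd : 0 < d) (hν₁ : 0 < ν₁) (hν₁W : ν₁ < k₁ * tanh (k₁*d))
    (hν₁N : ν₁ < νN) (hνNW : νN < kN * tanh (kN*d))
    (hprod : (kN * tanh (kN*d)) * ν₁ = νN * (k₁ * tanh (k₁*d)))
    (hineq : 0 < ν₁ * kN / k₁ - νN * k₁ / kN) :
    let U : ℝ → ℝ := fun h =>
      (ν₁/k₁) * (k₁ * tanh (k₁*d) - ν₁) * cosh (k₁*d) * sinh (kN*(d-h))
          * (kN * sinh (kN*h) - νN * cosh (kN*h))
        - (νN/kN) * (kN * tanh (kN*d) - νN) * cosh (kN*d) * sinh (k₁*(d-h))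
          * (k₁ * sinh (k₁*h) - ν₁ * cosh (k₁*h))
    let C : ℝ := ((kN * tanh (kN*d)) * (k₁ * tanh (k₁*d)) - νN * ν₁)
        * (ν₁ * kN / k₁ - νN * k₁ / kN) * cosh (kN*d) * cosh (k₁*d)
    U 0 = 0 ∧ 0 < C ∧
      (∃ δ > 0, ∀ h : ℝ, 0 < h → h < δ → 0 < U h) ∧
      (fun h => U h - h * C) =o[nhdsWithin 0 (Set.Ioi 0)] (fun h : ℝ => h) :=
  U_asymptotics_at_zero_general k₁ kN d ν₁ νN hk₁ hkN hν₁ hν₁W hν₁N hνNW hprod hineq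
end

section
/- Let 0 < k₁ < k_N, d > 0, and suppose 0 < ν₁ < ν₁^W, ν₁ < ν_N < ν_N^W, ν₁·k_N/k₁ − ν_N·k₁/k_N > 0, and ν_N^W·ν₁ − ν_N·ν₁^W < 0, where ν_j^W = k_j·tanh(k_jd). If moreover U is continuously differentiable on [0,d] and U′ vanishes at exactly one point of (0,d), then U has exactly one zero in the open interval (0,d). -/
/-!
`U` vanishes at `d`; `U 0` has the sign of `ν_N^W ν₁ - ν_N ν₁^W` and `U' d` that of
`ν_N k₁ / k_N - ν₁ k_N / k₁`, so both are negative. Hence `U` is positive just to the left of `d`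
and the intermediate value theorem gives a zero in `(0, d)`. Two zeros
`x < y` in `(0, d)`, together with the zero at `d`, would give by Rolle two distinct critical
points in `(0, d)`.
-/

open Real Set Filter Topology

section ZerosAndCriticalPoints

variable {f : ℝ → ℝ} {a b : ℝ}

lemma eventually_pos_left_of_deriv_neg (hf : deriv f b < 0) (hb : f b = 0) :
    ∀ᶠ x in 𝓝[<] b, 0 < f x := by
  filter_upwards [nhdsWithin_le_nhds (eventually_nhdsWithin_sign_eq_of_deriv_neg hf hb),
    self_mem_nhdsWithin] with x hx (hxb : x < b)
  rwa [sign_eq_one_iff.mpr (sub_pos.mpr hxb), sign_eq_one_iff] at hx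

lemma exists_mem_Ioo_eq_zero_of_deriv_neg (hab : a < b) (hf : ContinuousOn f (Icc a b))
    (ha : f a < 0) (hb : f b = 0) (hf' : deriv f b < 0) :
    ∃ x ∈ Ioo a b, f x = 0 := by
  obtain ⟨c, hfc, hc⟩ :=
    ((eventually_pos_left_of_deriv_neg hf' hb).and (Ioo_mem_nhdsLT hab)).exists
  obtain ⟨x, hx, hfx⟩ := intermediate_value_Ioo hc.1.le
    (hf.mono (Icc_subset_Icc_right hc.2.le)) ⟨ha, hfc⟩
  exact ⟨x, ⟨hx.1, hx.2.trans hc.2⟩, hfx⟩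

lemma subsingleton_zeros_of_subsingleton_critical (hf : ContinuousOn f (Icc a b))
    (hb : f b = 0) (hcrit : {x ∈ Ioo a b | deriv f x = 0}.Subsingleton) :
    {x ∈ Ioo a b | f x = 0}.Subsingleton := by
  have no_two_zeros :
      ∀ x ∈ {x ∈ Ioo a b | f x = 0}, ∀ y ∈ {x ∈ Ioo a b | f x = 0}, ¬x < y := by
    rintro x ⟨hx, hfx⟩ y ⟨hy, hfy⟩ hxy
    obtain ⟨c₁, hc₁, hdc₁⟩ := exists_deriv_eq_zero hxy
      (hf.mono (Icc_subset_Icc hx.1.le hy.2.le)) (hfx.trans hfy.symm)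
    obtain ⟨c₂, hc₂, hdc₂⟩ := exists_deriv_eq_zero hy.2
      (hf.mono (Icc_subset_Icc_left hy.1.le)) (hfy.trans hb.symm)
    have hc : c₁ = c₂ := hcrit ⟨⟨hx.1.trans hc₁.1, hc₁.2.trans hy.2⟩, hdc₁⟩
      ⟨⟨hy.1.trans hc₂.1, hc₂.2⟩, hdc₂⟩
    exact (hc₁.2.trans hc₂.1).ne hc
  exact fun x hx y hy => le_antisymm (not_lt.1 (no_two_zeros y hy x hx))
    (not_lt.1 (no_two_zeros x hx y hy))

lemma existsUnique_zero_of_existsUnique_critical (hab : a < b) (hf : ContinuousOn f (Icc a b))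
    (ha : f a < 0) (hb : f b = 0) (hf' : deriv f b < 0)
    (hcrit : ∃! x, x ∈ Ioo a b ∧ deriv f x = 0) :
    ∃! x, x ∈ Ioo a b ∧ f x = 0 := by
  obtain ⟨x, hx, hfx⟩ := exists_mem_Ioo_eq_zero_of_deriv_neg hab hf ha hb hf'
  exact ⟨x, ⟨hx, hfx⟩, fun y hy => subsingleton_zeros_of_subsingleton_critical hf hb
    (fun _ hu _ hv => hcrit.unique hu hv) hy ⟨hx, hfx⟩⟩

end ZerosAndCriticalPoints

lemma hasDerivAt_sinh_mul_sub_mul {k d : ℝ} {q : ℝ → ℝ} (hq : DifferentiableAt ℝ q d) :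
    HasDerivAt (fun h => sinh (k * (d - h)) * q h) (-k * q d) d := by
  have hs : HasDerivAt (fun h => sinh (k * (d - h))) (-k) d := by
    simpa using (((hasDerivAt_id d).const_sub d).const_mul k).sinh
  simpa using hs.fun_mul hq.hasDerivAt

noncomputable def U (k₁ kN d ν₁ νN h : ℝ) : ℝ :=
  (ν₁/k₁) * (k₁ * tanh (k₁*d) - ν₁) * cosh (k₁*d) * sinh (kN*(d-h))
      * (kN * sinh (kN*h) - νN * cosh (kN*h))
    - (νN/kN) * (kN * tanh (kN*d) - νN) * cosh (kN*d) * sinh (k₁*(d-h))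
      * (k₁ * sinh (k₁*h) - ν₁ * cosh (k₁*h))

namespace U

variable {k₁ kN d ν₁ νN : ℝ}

lemma continuous : Continuous (U k₁ kN d ν₁ νN) := by
  unfold U; fun_prop

lemma apply_self : U k₁ kN d ν₁ νN d = 0 := by
  simp [U]

lemma apply_zero (hk₁ : k₁ ≠ 0) (hkN : kN ≠ 0) :
    U k₁ kN d ν₁ νN 0 = ν₁ * νN / (k₁ * kN) * cosh (k₁*d) * cosh (kN*d)
      * ((kN * tanh (kN*d)) * ν₁ - νN * (k₁ * tanh (k₁*d))) := by
  have := (cosh_pos (k₁*d)).ne'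
  have := (cosh_pos (kN*d)).ne'
  simp only [U, tanh_eq_sinh_div_cosh, mul_zero, sub_zero, sinh_zero, cosh_zero, mul_one]
  field_simp
  ring

lemma hasDerivAt_self (hk₁ : k₁ ≠ 0) (hkN : kN ≠ 0) :
    HasDerivAt (U k₁ kN d ν₁ νN) (cosh (k₁*d) * cosh (kN*d) * (k₁ * tanh (k₁*d) - ν₁)
      * (kN * tanh (kN*d) - νN) * (νN * k₁ / kN - ν₁ * kN / k₁)) d := by
  set A := (ν₁/k₁) * (k₁ * tanh (k₁*d) - ν₁) * cosh (k₁*d)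
  set B := (νN/kN) * (kN * tanh (kN*d) - νN) * cosh (kN*d)
  have hN := (hasDerivAt_sinh_mul_sub_mul (k := kN) (d := d)
    (q := fun h => kN * sinh (kN*h) - νN * cosh (kN*h)) (by fun_prop)).const_mul A
  have h₁ := (hasDerivAt_sinh_mul_sub_mul (k := k₁) (d := d)
    (q := fun h => k₁ * sinh (k₁*h) - ν₁ * cosh (k₁*h)) (by fun_prop)).const_mul B
  have hU : U k₁ kN d ν₁ νN = fun h =>
      A * (sinh (kN*(d-h)) * (kN * sinh (kN*h) - νN * cosh (kN*h)))
      - B * (sinh (k₁*(d-h)) * (k₁ * sinh (k₁*h) - ν₁ * cosh (k₁*h))) := by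
    funext h
    simp only [U, A, B]
    ring
  rw [hU]
  refine (hN.sub h₁).congr_deriv ?_
  have := (cosh_pos (k₁*d)).ne'
  have := (cosh_pos (kN*d)).ne'
  simp only [A, B, tanh_eq_sinh_div_cosh]
  field_simp
  ring

end U

theorem U_unique_zero (k₁ kN d ν₁ νN : ℝ) (hk₁ : 0 < k₁) (hkN : k₁ < kN)
    (hd : 0 < d) (hν₁ : 0 < ν₁) (hν₁W : ν₁ < k₁ * tanh (k₁*d))
    (hν₁N : ν₁ < νN) (hνNW : νN < kN * tanh (kN*d))
    (hineq1 : 0 < ν₁ * kN / k₁ - νN * k₁ / kN)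
    (hineq2 : (kN * tanh (kN*d)) * ν₁ - νN * (k₁ * tanh (k₁*d)) < 0) :
    let U : ℝ → ℝ := fun h =>
      (ν₁/k₁) * (k₁ * tanh (k₁*d) - ν₁) * cosh (k₁*d) * sinh (kN*(d-h))
          * (kN * sinh (kN*h) - νN * cosh (kN*h))
        - (νN/kN) * (kN * tanh (kN*d) - νN) * cosh (kN*d) * sinh (k₁*(d-h))
          * (k₁ * sinh (k₁*h) - ν₁ * cosh (k₁*h))
    ContDiffOn ℝ 1 U (Set.Icc 0 d) →
    (∃! x : ℝ, x ∈ Set.Ioo 0 d ∧ deriv U x = 0) →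
    ∃! x : ℝ, x ∈ Set.Ioo 0 d ∧ U x = 0 := by
  intro _ _ hcrit
  have hkN₀ : 0 < kN := hk₁.trans hkN
  have hνN : 0 < νN := hν₁.trans hν₁N
  have hU₀ : U k₁ kN d ν₁ νN 0 < 0 := by
    rw [U.apply_zero hk₁.ne' hkN₀.ne']
    exact mul_neg_of_pos_of_neg (by positivity) hineq2
  have hU'd : deriv (U k₁ kN d ν₁ νN) d < 0 := by
    rw [(U.hasDerivAt_self hk₁.ne' hkN₀.ne').deriv]
    exact mul_neg_of_pos_of_neg
      (mul_pos (mul_pos (mul_pos (cosh_pos _) (cosh_pos _)) (sub_pos.2 hν₁W)) (sub_pos.2 hνNW))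
      (by linarith)
  exact existsUnique_zero_of_existsUnique_critical hd U.continuous.continuousOn hU₀
    U.apply_self hU'd hcrit
end
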